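/- arXiv:2405.17645 — 6 statements merged into one kernel-verified Lean document; each statement's English description precedes it below -/
import Mathlib

section
/- Let μ ⊆ λ be strict partitions and let n ≥ ℓ(λ). For every P-shifted set-valued tableau T of shape μ with entries at most n, there exists a P-shifted set-valued tableau T' of shape λ with entries at most n such that d(T') ≥ d(T). -/
/-!
Encoding of the primed alphabet `1' < 1 < 2' < 2 < ⋯`:
the primed letter `k'` is encoded as `2*k - 1` (odd) and the unprimed letter `k`
as `2*k` (even), for `k ≥ 1`.  Rows of (shifted) diagrams are indexed from `0`
(the bottom, longest row, French notation); the box in row `i`, column `j` of the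
shifted diagram of a strict partition `lam` exists iff `i ≤ j < i + lam i`.
-/

/-- Box `(i, j)` belongs to the shifted diagram of the strict partition `lam`. -/
def ShiftedBox (lam : ℕ → ℕ) (i j : ℕ) : Prop := i ≤ j ∧ j < i + lam i

/-- A `P`-shifted set-valued tableau of shape `lam` with entries at most (unprimed) `n`:
each box gets a nonempty finite set of letters; if the maximum of a box is primed (odd)
it is `≤` the min of the box above and `<` the min of the box to the right; if unprimed
(even) it is `<` the min of the box above and `≤` the min of the box to the right;
no primed entries on the main diagonal.  (The row/column conditions below are the
pointwise reformulations of these max/min conditions.) -/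
structure PSVT (lam : ℕ → ℕ) (n : ℕ) where
  T : ℕ × ℕ → Finset ℕ
  nonempty : ∀ i j, ShiftedBox lam i j → (T (i, j)).Nonempty
  bounded : ∀ i j, ShiftedBox lam i j → ∀ a ∈ T (i, j), 1 ≤ a ∧ a ≤ 2 * n
  row : ∀ i j, ShiftedBox lam i j → ShiftedBox lam i (j + 1) →
    ∀ a ∈ T (i, j), ∀ b ∈ T (i, j + 1), a < b ∨ (a = b ∧ a % 2 = 0)
  col : ∀ i j, ShiftedBox lam i j → ShiftedBox lam (i + 1) j →
    ∀ a ∈ T (i, j), ∀ b ∈ T (i + 1, j), a < b ∨ (a = b ∧ a % 2 = 1)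
  diag : ∀ i, ShiftedBox lam i i → ∀ a ∈ T (i, i), a % 2 = 0

/-- A `Q`-shifted set-valued tableau: as `PSVT` but primed entries are allowed on
the main diagonal. -/
structure QSVT (lam : ℕ → ℕ) (n : ℕ) where
  T : ℕ × ℕ → Finset ℕ
  nonempty : ∀ i j, ShiftedBox lam i j → (T (i, j)).Nonempty
  bounded : ∀ i j, ShiftedBox lam i j → ∀ a ∈ T (i, j), 1 ≤ a ∧ a ≤ 2 * n
  row : ∀ i j, ShiftedBox lam i j → ShiftedBox lam i (j + 1) →
    ∀ a ∈ T (i, j), ∀ b ∈ T (i, j + 1), a < b ∨ (a = b ∧ a % 2 = 0)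
  col : ∀ i j, ShiftedBox lam i j → ShiftedBox lam (i + 1) j →
    ∀ a ∈ T (i, j), ∀ b ∈ T (i + 1, j), a < b ∨ (a = b ∧ a % 2 = 1)

/-- The degree of a set-valued filling: total number of entries over all boxes
of the shifted diagram (`ℓ` = number of rows). -/
def tabDeg (lam : ℕ → ℕ) (ℓ : ℕ) (T : ℕ × ℕ → Finset ℕ) : ℕ :=
  ∑ i ∈ Finset.range ℓ, ∑ j ∈ Finset.Ico i (i + lam i), (T (i, j)).card

/-- `lam` is a strict partition with exactly `ℓ` (positive, strictly decreasing) parts. -/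
def IsStrictPartitionOf (lam : ℕ → ℕ) (ℓ : ℕ) : Prop :=
  (∀ i, i + 1 < ℓ → lam (i + 1) < lam i) ∧ (∀ i, i < ℓ → 0 < lam i) ∧ ∀ i, ℓ ≤ i → lam i = 0

/-- `lam` is a D-partition with exactly `ℓ` parts: consecutive parts differ by at least 2. -/
def IsDPartitionOf (lam : ℕ → ℕ) (ℓ : ℕ) : Prop :=
  (∀ i, i + 1 < ℓ → lam (i + 1) + 2 ≤ lam i) ∧ (∀ i, i < ℓ → 0 < lam i) ∧ ∀ i, ℓ ≤ i → lam i = 0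

/-- Componentwise containment of partitions. -/
def Subpartition (mu lam : ℕ → ℕ) : Prop := ∀ i, mu i ≤ lam i

/-- `Δ` (with `ℓΔ` parts) is the largest D-partition contained in `lam`. -/
def IsLargestDPartitionIn (Δ lam : ℕ → ℕ) (ℓΔ : ℕ) : Prop :=
  IsDPartitionOf Δ ℓΔ ∧ Subpartition Δ lam ∧
    ∀ μ m, IsDPartitionOf μ m → Subpartition μ lam → Subpartition μ Δ

/-- The degree of the `P`-Grothendieck polynomial `GP_{lam,n}`: the maximum degree
of a `P`-shifted set-valued tableau of shape `lam` with entries at most `n`. -/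
noncomputable def degGP (lam : ℕ → ℕ) (ℓ n : ℕ) : ℕ :=
  sSup {d | ∃ T : PSVT lam n, tabDeg lam ℓ T.T = d}

/-- The degree of the `Q`-Grothendieck polynomial `GQ_{lam,n}`. -/
noncomputable def degGQ (lam : ℕ → ℕ) (ℓ n : ℕ) : ℕ :=
  sSup {d | ∃ T : QSVT lam n, tabDeg lam ℓ T.T = d}

namespace Stmt3Aux

/-- point update of a filling -/
def updF (U : ℕ × ℕ → Finset ℕ) (p : ℕ × ℕ) (S : Finset ℕ) : ℕ × ℕ → Finset ℕ :=
  fun q => if q = p then S else U q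

@[simp] lemma updF_same (U : ℕ × ℕ → Finset ℕ) (p : ℕ × ℕ) (S : Finset ℕ) :
    updF U p S p = S := by simp [updF]

lemma updF_ne (U : ℕ × ℕ → Finset ℕ) {p q : ℕ × ℕ} (S : Finset ℕ) (h : q ≠ p) :
    updF U p S q = U q := by simp [updF, h]

lemma updF_idem (U : ℕ × ℕ → Finset ℕ) (p : ℕ × ℕ) (S S' : Finset ℕ) :
    updF (updF U p S) p S' = updF U p S' := by
  funext q; by_cases h : q = p <;> simp [updF, h]

lemma updF_comm (U : ℕ × ℕ → Finset ℕ) {p q : ℕ × ℕ} (S S' : Finset ℕ) (h : p ≠ q) :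
    updF (updF U p S) q S' = updF (updF U q S') p S := by
  funext x
  by_cases h1 : x = q <;> by_cases h2 : x = p <;>
    simp_all [updF]

/-- point update of a shape -/
def updN (ν : ℕ → ℕ) (r v : ℕ) : ℕ → ℕ := fun x => if x = r then v else ν x

@[simp] lemma updN_same (ν : ℕ → ℕ) (r v : ℕ) : updN ν r v r = v := by simp [updN]

lemma updN_ne (ν : ℕ → ℕ) {r : ℕ} (v : ℕ) {x : ℕ} (h : x ≠ r) : updN ν r v x = ν x := by
  simp [updN, h]

section shape

variable {ν : ℕ → ℕ} {L : ℕ}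

lemma edge_mono (h : IsStrictPartitionOf ν L) {i k : ℕ} (hk : i + k < L) :
    (i + k) + ν (i + k) ≤ i + ν i := by
  induction k with
  | zero => simp
  | succ k ih =>
    have h1 : i + k < L := by omega
    have h2 : ν (i + k + 1) < ν (i + k) := h.1 (i + k) (by omega)
    have := ih h1
    have e : i + (k + 1) = (i + k) + 1 := by omega
    rw [e]
    omega

lemma row_lt (h : IsStrictPartitionOf ν L) {i j : ℕ} (hb : ShiftedBox ν i j) : i < L := by
  by_contra hc
  have := h.2.2 i (by omega)
  obtain ⟨h1, h2⟩ := hb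
  omega

lemma box_up (h : IsStrictPartitionOf ν L) {i j i' : ℕ} (hb : ShiftedBox ν i j)
    (hi : i' ≤ i) (hij : i' ≤ j) : ShiftedBox ν i' j := by
  have hiL : i < L := row_lt h hb
  have hmono : i + ν i ≤ i' + ν i' := by
    have := edge_mono h (i := i') (k := i - i') (by omega)
    have e : i' + (i - i') = i := by omega
    rw [e] at this
    exact this
  obtain ⟨h1, h2⟩ := hb
  exact ⟨hij, by omega⟩

end shape

section tabdeg

variable {ν : ℕ → ℕ} {L : ℕ}

lemma tabDeg_updF (U : ℕ × ℕ → Finset ℕ) (i0 c0 : ℕ)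
    (hi0 : i0 < L) (hc1 : i0 ≤ c0) (hc2 : c0 < i0 + ν i0) (S : Finset ℕ) :
    tabDeg ν L (updF U (i0, c0) S) + (U (i0, c0)).card = tabDeg ν L U + S.card := by
  unfold tabDeg
  have hi0' : i0 ∈ Finset.range L := Finset.mem_range.mpr hi0
  rw [← Finset.add_sum_erase _ _ hi0', ← Finset.add_sum_erase _
    (fun i => ∑ j ∈ Finset.Ico i (i + ν i), (U (i, j)).card) hi0']
  have herase : ∑ x ∈ (Finset.range L).erase i0,
      (∑ j ∈ Finset.Ico x (x + ν x), ((updF U (i0, c0) S) (x, j)).card)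
      = ∑ x ∈ (Finset.range L).erase i0, ∑ j ∈ Finset.Ico x (x + ν x), (U (x, j)).card := by
    refine Finset.sum_congr rfl fun x hx => Finset.sum_congr rfl fun j _ => ?_
    have hxne : x ≠ i0 := (Finset.mem_erase.mp hx).1
    rw [updF_ne]
    intro hxy
    exact hxne (congrArg Prod.fst hxy)
  rw [herase]
  have hc0' : c0 ∈ Finset.Ico i0 (i0 + ν i0) := Finset.mem_Ico.mpr ⟨hc1, hc2⟩
  have hrow : ∑ j ∈ Finset.Ico i0 (i0 + ν i0), ((updF U (i0, c0) S) (i0, j)).card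
      + (U (i0, c0)).card
      = (∑ j ∈ Finset.Ico i0 (i0 + ν i0), (U (i0, j)).card) + S.card := by
    rw [← Finset.add_sum_erase _ _ hc0', ← Finset.add_sum_erase _
      (fun j => (U (i0, j)).card) hc0']
    have herase2 : ∑ j ∈ (Finset.Ico i0 (i0 + ν i0)).erase c0,
        ((updF U (i0, c0) S) (i0, j)).card
        = ∑ j ∈ (Finset.Ico i0 (i0 + ν i0)).erase c0, (U (i0, j)).card := by
      refine Finset.sum_congr rfl fun j hj => ?_
      have hjne : j ≠ c0 := (Finset.mem_erase.mp hj).1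
      rw [updF_ne]
      intro hxy
      exact hjne (congrArg Prod.snd hxy)
    rw [herase2, updF_same]
    omega
  omega

lemma tabDeg_congr_len {L1 L2 : ℕ} (hle : L1 ≤ L2) (hz : ∀ i, L1 ≤ i → i < L2 → ν i = 0)
    (U : ℕ × ℕ → Finset ℕ) : tabDeg ν L2 U = tabDeg ν L1 U := by
  unfold tabDeg
  simp only [Finset.range_eq_Ico]
  rw [← Finset.sum_Ico_consecutive _ (Nat.zero_le L1) hle]
  have : ∑ i ∈ Finset.Ico L1 L2, ∑ j ∈ Finset.Ico i (i + ν i), (U (i, j)).card = 0 := by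
    refine Finset.sum_eq_zero fun i hi => ?_
    obtain ⟨h1, h2⟩ := Finset.mem_Ico.mp hi
    rw [hz i h1 h2]
    simp
  omega

lemma tabDeg_shape_succ {r : ℕ} (hr : r < L) (U : ℕ × ℕ → Finset ℕ) :
    tabDeg (updN ν r (ν r + 1)) L U = tabDeg ν L U + (U (r, r + ν r)).card := by
  unfold tabDeg
  have hr' : r ∈ Finset.range L := Finset.mem_range.mpr hr
  rw [← Finset.add_sum_erase _ _ hr', ← Finset.add_sum_erase _
    (fun i => ∑ j ∈ Finset.Ico i (i + ν i), (U (i, j)).card) hr']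
  have herase : ∑ x ∈ (Finset.range L).erase r,
      ∑ j ∈ Finset.Ico x (x + (updN ν r (ν r + 1)) x), (U (x, j)).card
      = ∑ x ∈ (Finset.range L).erase r, ∑ j ∈ Finset.Ico x (x + ν x), (U (x, j)).card := by
    refine Finset.sum_congr rfl fun x hx => ?_
    rw [updN_ne ν (ν r + 1) (Finset.mem_erase.mp hx).1]
  rw [herase, updN_same]
  have hrow : ∑ j ∈ Finset.Ico r (r + (ν r + 1)), (U (r, j)).card
      = (∑ j ∈ Finset.Ico r (r + ν r), (U (r, j)).card) + (U (r, r + ν r)).card := by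
    have e : r + (ν r + 1) = (r + ν r) + 1 := by omega
    rw [e, Finset.sum_Ico_succ_top (by omega)]
  omega

end tabdeg

end Stmt3Aux

namespace Stmt3Aux

/-- All `PSVT` conditions except nonemptiness of boxes. -/
structure Core (ν : ℕ → ℕ) (n : ℕ) (U : ℕ × ℕ → Finset ℕ) : Prop where
  bounded : ∀ i j, ShiftedBox ν i j → ∀ a ∈ U (i, j), 1 ≤ a ∧ a ≤ 2 * n
  row : ∀ i j, ShiftedBox ν i j → ShiftedBox ν i (j + 1) →
    ∀ a ∈ U (i, j), ∀ b ∈ U (i, j + 1), a < b ∨ (a = b ∧ a % 2 = 0)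
  col : ∀ i j, ShiftedBox ν i j → ShiftedBox ν (i + 1) j →
    ∀ a ∈ U (i, j), ∀ b ∈ U (i + 1, j), a < b ∨ (a = b ∧ a % 2 = 1)
  diag : ∀ i, ShiftedBox ν i i → ∀ a ∈ U (i, i), a % 2 = 0

variable {ν : ℕ → ℕ} {n : ℕ} {U : ℕ × ℕ → Finset ℕ}

/-- Shrinking one box preserves `Core`. -/
lemma Core.sub (hU : Core ν n U) {p : ℕ × ℕ} {S : Finset ℕ} (hS : S ⊆ U p) :
    Core ν n (updF U p S) := by
  have hmem : ∀ q a, a ∈ updF U p S q → a ∈ U q := by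
    intro q a ha
    by_cases h : q = p
    · subst h; rw [updF_same] at ha; exact hS ha
    · rwa [updF_ne _ _ h] at ha
  constructor
  · intro i j hb a ha; exact hU.bounded i j hb a (hmem _ a ha)
  · intro i j hb hb' a ha b hb2
    exact hU.row i j hb hb' a (hmem _ a ha) b (hmem _ b hb2)
  · intro i j hb hb' a ha b hb2
    exact hU.col i j hb hb' a (hmem _ a ha) b (hmem _ b hb2)
  · intro i hb a ha; exact hU.diag i hb a (hmem _ a ha)

/-- Filling one box with a singleton `{u}` preserves `Core`, given local compatibility. -/
lemma Core.fill (hU : Core ν n U) {i c u : ℕ}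
    (hub : 1 ≤ u ∧ u ≤ 2 * n)
    (hdiag : c = i → u % 2 = 0)
    (hrowL : ∀ y, y + 1 = c → ShiftedBox ν i y → ∀ a ∈ U (i, y), a < u ∨ (a = u ∧ a % 2 = 0))
    (hrowR : ShiftedBox ν i (c + 1) → ∀ b ∈ U (i, c + 1), u < b ∨ (u = b ∧ u % 2 = 0))
    (hcolB : ∀ x, x + 1 = i → ShiftedBox ν x c → ∀ a ∈ U (x, c), a < u ∨ (a = u ∧ a % 2 = 1))
    (hcolA : ShiftedBox ν (i + 1) c → ∀ b ∈ U (i + 1, c), u < b ∨ (u = b ∧ u % 2 = 1)) :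
    Core ν n (updF U (i, c) {u}) := by
  constructor
  · intro x y hb a ha
    by_cases h : (x, y) = (i, c)
    · rw [h, updF_same, Finset.mem_singleton] at ha; omega
    · rw [updF_ne _ _ h] at ha; exact hU.bounded x y hb a ha
  · intro x y hb hb' a ha b hb2
    by_cases h1 : (x, y) = (i, c)
    · obtain ⟨hx1, hx2⟩ := Prod.mk.inj h1
      have h2 : (x, y + 1) ≠ (i, c) := by
        intro hc; have := congrArg Prod.snd hc; simp at this; omega
      rw [h1, updF_same, Finset.mem_singleton] at ha
      rw [updF_ne _ _ h2] at hb2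
      subst ha; subst hx1; subst hx2
      exact hrowR hb' b hb2
    · by_cases h2 : (x, y + 1) = (i, c)
      · have hx1 : x = i := congrArg Prod.fst h2
        have hx2 : y + 1 = c := congrArg Prod.snd h2
        rw [updF_ne _ _ h1] at ha
        rw [h2, updF_same, Finset.mem_singleton] at hb2
        subst hb2; subst hx1
        subst hx2
        exact hrowL y rfl hb a ha
      · rw [updF_ne _ _ h1] at ha; rw [updF_ne _ _ h2] at hb2
        exact hU.row x y hb hb' a ha b hb2
  · intro x y hb hb' a ha b hb2
    by_cases h1 : (x, y) = (i, c)
    · have hx1 : x = i := congrArg Prod.fst h1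
      have hx2 : y = c := congrArg Prod.snd h1
      have h2 : (x + 1, y) ≠ (i, c) := by
        intro hc; have := congrArg Prod.fst hc; simp at this; omega
      rw [h1, updF_same, Finset.mem_singleton] at ha
      rw [updF_ne _ _ h2] at hb2
      subst ha; subst hx1; subst hx2
      exact hcolA hb' b hb2
    · by_cases h2 : (x + 1, y) = (i, c)
      · have hx1 : x + 1 = i := congrArg Prod.fst h2
        have hx2 : y = c := congrArg Prod.snd h2
        rw [updF_ne _ _ h1] at ha
        rw [h2, updF_same, Finset.mem_singleton] at hb2
        subst hb2
        subst hx2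
        exact hcolB x hx1 hb a ha
      · rw [updF_ne _ _ h1] at ha; rw [updF_ne _ _ h2] at hb2
        exact hU.col x y hb hb' a ha b hb2
  · intro x hb a ha
    by_cases h : (x, x) = (i, c)
    · have hx1 : x = i := congrArg Prod.fst h
      have hx2 : x = c := congrArg Prod.snd h
      rw [h, updF_same, Finset.mem_singleton] at ha
      subst ha
      exact hdiag (by omega)
    · rw [updF_ne _ _ h] at ha; exact hU.diag x hb a ha

end Stmt3Aux

namespace Stmt3Aux

variable {ν : ℕ → ℕ} {L n Λ : ℕ}

lemma pair_ne_fst {a b c d : ℕ} (h : a ≠ c) : (a, b) ≠ (c, d) := by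
  intro hc; exact h (congrArg Prod.fst hc)

lemma pair_ne_snd {a b c d : ℕ} (h : b ≠ d) : (a, b) ≠ (c, d) := by
  intro hc; exact h (congrArg Prod.snd hc)

/-- The cascade: fill a hole at `(i,c)` with target value `u`, repairing conflicts
down-left, never decreasing the degree. -/
lemma fill_rec (h : IsStrictPartitionOf ν L) (hΛ : L ≤ Λ) :
    ∀ K i c (U : ℕ × ℕ → Finset ℕ) (u : ℕ), i + c ≤ K →
    Core ν n U →
    (∀ x y, ShiftedBox ν x y → (x, y) ≠ (i, c) → (U (x, y)).Nonempty) →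
    ShiftedBox ν i c → U (i, c) = ∅ →
    u ≤ 2 * n → 2 * i + 2 + u % 2 ≤ u →
    (u % 2 = 1 → ShiftedBox ν (i + 1) c ∧ U (i + 1, c) = {u + 1}) →
    (u % 2 = 0 → ShiftedBox ν i (c + 1) ∧ U (i, c + 1) = {u + 1}) →
    (u % 2 = 1 → ShiftedBox ν i (c + 1) → ∀ b ∈ U (i, c + 1), u < b) →
    (u % 2 = 0 → ShiftedBox ν (i + 1) c → ∀ b ∈ U (i + 1, c), u < b) →
    (∀ y, y + 1 = c → ShiftedBox ν i y → ∀ a ∈ U (i, y), a ≤ u + u % 2) →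
    (∀ x, x + 1 = i → ShiftedBox ν x c → ∀ a ∈ U (x, c), a ≤ u + 1 - u % 2) →
    ∃ U', (∀ x y, ShiftedBox ν x y → (U' (x, y)).Nonempty) ∧ Core ν n U' ∧
      tabDeg ν Λ U ≤ tabDeg ν Λ U' := by
  intro K
  induction K using Nat.strong_induction_on with
  | _ K ih =>
  intro i c U u hK hU hne hbox hhole hu2n hB hCodd hCeven hF hG hDl hDb
  have hb1 : i ≤ c := hbox.1
  have hb2 : c < i + ν i := hbox.2
  have hiΛ : i < Λ := lt_of_lt_of_le (row_lt h hbox) hΛ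
  by_cases hpar : u % 2 = 1
  · -- ODD value: potential conflicts to the LEFT
    obtain ⟨hboxA, hUA⟩ := hCodd hpar
    have hci : i + 1 ≤ c := hboxA.1
    obtain ⟨c', rfl⟩ : ∃ c', c = c' + 1 := ⟨c - 1, by omega⟩
    have hboxL : ShiftedBox ν i c' := ⟨by omega, by omega⟩
    -- squeeze: off-diagonal, u+1 cannot be in the left box
    have hsq : ¬ (c' = i) → u + 1 ∉ U (i, c') := by
      intro hd hmem
      have hboxUL : ShiftedBox ν (i + 1) c' := ⟨by omega, by
        have := hboxA.2; omega⟩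
      obtain ⟨b, hbmem⟩ := hne (i + 1) c' hboxUL (pair_ne_fst (by omega))
      have h1 := hU.col i c' hboxL hboxUL (u + 1) hmem b hbmem
      have h1' : u + 1 < b := by rcases h1 with h1 | ⟨he, hp⟩ <;> omega
      have h2 := hU.row (i + 1) c' hboxUL hboxA b hbmem (u + 1)
        (by rw [hUA]; exact Finset.mem_singleton_self _)
      rcases h2 with h2 | ⟨he, hp⟩ <;> omega
    have hDl' : ∀ a ∈ U (i, c'), a ≤ u + 1 := by
      intro a ha
      have := hDl c' rfl hboxL a ha
      omega
    set v : ℕ := if c' = i then u + 1 else u with hv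
    have hconf : ∀ a ∈ U (i, c'), a ≠ v → a < u := by
      intro a ha hav
      have h1 : a ≤ u + 1 := hDl' a ha
      by_cases hd : c' = i
      · have hpar0 : a % 2 = 0 := by
          subst hd
          exact hU.diag _ hboxL a ha
        have : a ≠ u + 1 := by rw [hv] at hav; simp [hd] at hav; exact hav
        omega
      · have h3 : a ≠ u + 1 := fun he => hsq hd (he ▸ ha)
        have h4 : a ≠ u := by rw [hv] at hav; simp [hd] at hav; exact hav
        omega
    have hvmem_par : ∀ a, a = v → a ∈ U (i, c') → a ≤ u + 1 := fun a _ ha => hDl' a ha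
    -- the "done" construction, given that all left entries are < u
    have hdone : (∀ a ∈ U (i, c'), a < u) →
        ∃ U', (∀ x y, ShiftedBox ν x y → (U' (x, y)).Nonempty) ∧ Core ν n U' ∧
          tabDeg ν Λ U ≤ tabDeg ν Λ U' := by
      intro hleft
      refine ⟨updF U (i, c' + 1) {u}, ?_, ?_, ?_⟩
      · intro x y hbxy
        by_cases hq : (x, y) = (i, c' + 1)
        · rw [hq, updF_same]; exact ⟨u, Finset.mem_singleton_self u⟩
        · rw [updF_ne _ _ hq]; exact hne x y hbxy hq
      · refine hU.fill ⟨by omega, hu2n⟩ (fun hh => absurd hh (by omega)) ?_ ?_ ?_ ?_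
        · intro y hy hby a ha
          have hyc : y = c' := by omega
          subst hyc
          exact Or.inl (hleft a ha)
        · intro hbR b hbmem
          exact Or.inl (hF hpar hbR b hbmem)
        · intro x hx hbx a ha
          have h1 := hDb x hx hbx a ha
          have hau : a ≤ u := by omega
          rcases eq_or_lt_of_le hau with he | hl
          · exact Or.inr ⟨he, by omega⟩
          · exact Or.inl hl
        · intro hbA b hbmem
          rw [hUA, Finset.mem_singleton] at hbmem
          exact Or.inl (by omega)
      · have hdeg := tabDeg_updF (ν := ν) (L := Λ) U i (c' + 1) hiΛ hb1 hb2 ({u} : Finset ℕ)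
        rw [hhole] at hdeg
        simp only [Finset.card_empty, Finset.card_singleton] at hdeg
        omega
    by_cases hmem : v ∈ U (i, c')
    · by_cases hsing : U (i, c') = {v}
      · -- RECURSE leftwards
        have hne_holes : (i, c' + 1) ≠ (i, c') := pair_ne_snd (by omega)
        set U₂ : ℕ × ℕ → Finset ℕ := updF (updF U (i, c') ∅) (i, c' + 1) {u} with hU₂def
        have hU₂core : Core ν n U₂ := by
          refine (hU.sub (p := (i, c')) (S := ∅) (by simp)).fill
            ⟨by omega, hu2n⟩ (fun hh => absurd hh (by omega)) ?_ ?_ ?_ ?_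
          · intro y hy hby a ha
            have hyc : y = c' := by omega
            subst hyc
            rw [updF_same] at ha
            exact absurd ha (Finset.notMem_empty a)
          · intro hbR b hbmem
            rw [updF_ne _ _ (pair_ne_snd (by omega))] at hbmem
            exact Or.inl (hF hpar hbR b hbmem)
          · intro x hx hbx a ha
            rw [updF_ne _ _ (pair_ne_snd (by omega))] at ha
            have h1 := hDb x hx hbx a ha
            have hau : a ≤ u := by omega
            rcases eq_or_lt_of_le hau with he | hl
            · exact Or.inr ⟨he, by omega⟩
            · exact Or.inl hl
          · intro hbA b hbmem
            rw [updF_ne _ _ (pair_ne_fst (by omega))] at hbmem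
            rw [hUA, Finset.mem_singleton] at hbmem
            exact Or.inl (by omega)
        have hvm : v ∈ U (i, c') := hmem
        have hvu : v ≤ u + 1 := hDl' v hvm
        have hU₂left : U₂ (i, c') = ∅ := by
          rw [hU₂def, updF_ne _ _ (pair_ne_snd (by omega)), updF_same]
        have hU₂hole : U₂ (i, c' + 1) = {u} := by rw [hU₂def, updF_same]
        have hU₂other : ∀ q : ℕ × ℕ, q ≠ (i, c') → q ≠ (i, c' + 1) → U₂ q = U q := by
          intro q h1 h2
          rw [hU₂def, updF_ne _ _ h2, updF_ne _ _ h1]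
        obtain ⟨U', hne', hcore', hdeg'⟩ := ih (i + c') (by omega) i c' U₂ (u - 1)
          (le_refl _) hU₂core
          (by
            intro x y hbxy hq
            by_cases hq2 : (x, y) = (i, c' + 1)
            · rw [hq2, hU₂hole]; exact ⟨u, Finset.mem_singleton_self u⟩
            · rw [hU₂other _ hq hq2]; exact hne x y hbxy hq2)
          hboxL hU₂left (by omega) (by omega)
          (fun hh => absurd hh (by omega))
          (by
            intro _
            refine ⟨hbox, ?_⟩
            rw [hU₂hole]
            congr 1
            omega)
          (fun hh => absurd hh (by omega))
          (by
            intro _ hbx b hbmem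
            by_cases hd : c' = i
            · exact absurd hbx.1 (by omega)
            · have hvu' : v = u := by rw [hv, if_neg hd]
              rw [hU₂other _ (pair_ne_fst (by omega)) (pair_ne_fst (by omega))] at hbmem
              have h1 := hU.col i c' hboxL hbx v (by rw [hsing]; exact Finset.mem_singleton_self v) b hbmem
              rcases h1 with h1 | ⟨he, hp⟩ <;> omega)
          (by
            intro y hy hby a ha
            by_cases hd : c' = i
            · exact absurd hby.1 (by omega)
            · have hvu' : v = u := by rw [hv, if_neg hd]
              rw [hU₂other _ (pair_ne_snd (by omega)) (pair_ne_snd (by omega))] at ha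
              have h1 := hU.row i y hby (by rw [hy]; exact hboxL) a ha v
                (by rw [hy, hsing]; exact Finset.mem_singleton_self v)
              rcases h1 with h1 | ⟨he, hp⟩ <;> omega)
          (by
            intro x hx hbx a ha
            rw [hU₂other _ (pair_ne_fst (by omega)) (pair_ne_fst (by omega))] at ha
            have h1 := hU.col x c' hbx (by rw [hx]; exact hboxL) a ha v
              (by rw [hx, hsing]; exact Finset.mem_singleton_self v)
            have hpv : v = u ∨ v = u + 1 := by
              rw [hv]; by_cases hd : c' = i <;> simp [hd]
            rcases h1 with h1 | ⟨he, hp⟩ <;> rcases hpv with h2 | h2 <;> omega)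
        refine ⟨U', hne', hcore', ?_⟩
        have hdA := tabDeg_updF (ν := ν) (L := Λ) U i c'
          (lt_of_lt_of_le (row_lt h hboxL) hΛ) hboxL.1 hboxL.2 (∅ : Finset ℕ)
        have hdB := tabDeg_updF (ν := ν) (L := Λ) (updF U (i, c') ∅) i (c' + 1) hiΛ hb1 hb2
          ({u} : Finset ℕ)
        rw [updF_ne _ _ hne_holes, hhole] at hdB
        rw [hsing] at hdA
        simp only [Finset.card_empty, Finset.card_singleton] at hdA hdB
        rw [← hU₂def] at hdB
        omega
      · -- REMOVE one conflicting entry from the left box, then fill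
        have hne_holes : (i, c' + 1) ≠ (i, c') := pair_ne_snd (by omega)
        have hernon : ((U (i, c')).erase v).Nonempty := by
          have hex : ∃ w ∈ U (i, c'), w ≠ v := by
            by_contra hall
            push_neg at hall
            exact hsing (Finset.eq_singleton_iff_unique_mem.mpr ⟨hmem, hall⟩)
          obtain ⟨w, hw1, hw2⟩ := hex
          exact ⟨w, Finset.mem_erase.mpr ⟨hw2, hw1⟩⟩
        set U₁ : ℕ × ℕ → Finset ℕ := updF U (i, c') ((U (i, c')).erase v) with hU₁def
        refine ⟨updF U₁ (i, c' + 1) {u}, ?_, ?_, ?_⟩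
        · intro x y hbxy
          by_cases hq : (x, y) = (i, c' + 1)
          · rw [hq, updF_same]; exact ⟨u, Finset.mem_singleton_self u⟩
          · rw [updF_ne _ _ hq]
            by_cases hq2 : (x, y) = (i, c')
            · rw [hU₁def, hq2, updF_same]; exact hernon
            · rw [hU₁def, updF_ne _ _ hq2]; exact hne x y hbxy hq
        · refine (hU.sub (p := (i, c')) (Finset.erase_subset _ _)).fill
            ⟨by omega, hu2n⟩ (fun hh => absurd hh (by omega)) ?_ ?_ ?_ ?_
          · intro y hy hby a ha
            have hyc : y = c' := by omega
            subst hyc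
            rw [updF_same] at ha
            obtain ⟨hav, ha'⟩ := Finset.mem_erase.mp ha
            exact Or.inl (hconf a ha' hav)
          · intro hbR b hbmem
            rw [updF_ne _ _ (pair_ne_snd (by omega))] at hbmem
            exact Or.inl (hF hpar hbR b hbmem)
          · intro x hx hbx a ha
            rw [updF_ne _ _ (pair_ne_snd (by omega))] at ha
            have h1 := hDb x hx hbx a ha
            have hau : a ≤ u := by omega
            rcases eq_or_lt_of_le hau with he | hl
            · exact Or.inr ⟨he, by omega⟩
            · exact Or.inl hl
          · intro hbA b hbmem
            rw [updF_ne _ _ (pair_ne_fst (by omega))] at hbmem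
            rw [hUA, Finset.mem_singleton] at hbmem
            exact Or.inl (by omega)
        · have hdA := tabDeg_updF (ν := ν) (L := Λ) U i c'
            (lt_of_lt_of_le (row_lt h hboxL) hΛ) hboxL.1 hboxL.2 ((U (i, c')).erase v)
          have hdB := tabDeg_updF (ν := ν) (L := Λ) U₁ i (c' + 1) hiΛ hb1 hb2 ({u} : Finset ℕ)
          have hU₁hole : U₁ (i, c' + 1) = U (i, c' + 1) := by
            rw [hU₁def, updF_ne _ _ hne_holes]
          rw [hU₁hole, hhole] at hdB
          have hcard := Finset.card_erase_of_mem hmem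
          have hpos : 0 < (U (i, c')).card := Finset.card_pos.mpr ⟨v, hmem⟩
          simp only [Finset.card_empty, Finset.card_singleton] at hdA hdB
          rw [← hU₁def] at hdA
          omega
    · -- no conflict at all
      exact hdone (fun a ha => hconf a ha (fun he => hmem (he ▸ ha)))
  · -- EVEN value: potential conflicts BELOW
    have hpar0 : u % 2 = 0 := by omega
    obtain ⟨hboxR, hUR⟩ := hCeven hpar0
    -- the "done" construction, given that all entries below are < u
    have hdone : (∀ x, x + 1 = i → ShiftedBox ν x c → ∀ a ∈ U (x, c), a < u) →
        ∃ U', (∀ x y, ShiftedBox ν x y → (U' (x, y)).Nonempty) ∧ Core ν n U' ∧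
          tabDeg ν Λ U ≤ tabDeg ν Λ U' := by
      intro hbelow
      refine ⟨updF U (i, c) {u}, ?_, ?_, ?_⟩
      · intro x y hbxy
        by_cases hq : (x, y) = (i, c)
        · rw [hq, updF_same]; exact ⟨u, Finset.mem_singleton_self u⟩
        · rw [updF_ne _ _ hq]; exact hne x y hbxy hq
      · refine hU.fill ⟨by omega, hu2n⟩ (fun _ => hpar0) ?_ ?_ ?_ ?_
        · intro y hy hby a ha
          have h1 := hDl y hy hby a ha
          have hau : a ≤ u := by omega
          rcases eq_or_lt_of_le hau with he | hl
          · exact Or.inr ⟨he, by omega⟩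
          · exact Or.inl hl
        · intro hbR b hbmem
          rw [hUR, Finset.mem_singleton] at hbmem
          exact Or.inl (by omega)
        · intro x hx hbx a ha
          exact Or.inl (hbelow x hx hbx a ha)
        · intro hbA b hbmem
          exact Or.inl (hG hpar0 hbA b hbmem)
      · have hdeg := tabDeg_updF (ν := ν) (L := Λ) U i c hiΛ hb1 hb2 ({u} : Finset ℕ)
        rw [hhole] at hdeg
        simp only [Finset.card_empty, Finset.card_singleton] at hdeg
        omega
    by_cases hi0 : i = 0
    · exact hdone (fun x hx _ => absurd hx (by omega))
    · obtain ⟨i', rfl⟩ : ∃ i', i = i' + 1 := ⟨i - 1, by omega⟩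
      have hboxB : ShiftedBox ν i' c := box_up h hbox (by omega) (by omega)
      -- squeeze: u+1 cannot be in the box below
      have hsq : u + 1 ∉ U (i', c) := by
        intro hmem
        have hboxR' : ShiftedBox ν i' (c + 1) := box_up h hboxR (by omega) (by omega)
        obtain ⟨b, hbmem⟩ := hne i' (c + 1) hboxR' (pair_ne_fst (by omega))
        have h1 := hU.row i' c hboxB hboxR' (u + 1) hmem b hbmem
        have h1' : u + 1 < b := by rcases h1 with h1 | ⟨he, hp⟩ <;> omega
        have h2 := hU.col i' (c + 1) hboxR' hboxR b hbmem (u + 1)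
          (by rw [hUR]; exact Finset.mem_singleton_self _)
        rcases h2 with h2 | ⟨he, hp⟩ <;> omega
      have hDb' : ∀ a ∈ U (i', c), a ≤ u + 1 := by
        intro a ha
        have := hDb i' rfl hboxB a ha
        omega
      have hconf : ∀ a ∈ U (i', c), a ≠ u → a < u := by
        intro a ha hau
        have h1 : a ≤ u + 1 := hDb' a ha
        have h2 : a ≠ u + 1 := fun he => hsq (he ▸ ha)
        omega
      by_cases hmem : u ∈ U (i', c)
      · by_cases hsing : U (i', c) = {u}
        · -- RECURSE downwards
          have hne_holes : ((i' : ℕ) + 1, c) ≠ ((i' : ℕ), c) := pair_ne_fst (by omega)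
          set U₂ : ℕ × ℕ → Finset ℕ := updF (updF U (i', c) ∅) (i' + 1, c) {u} with hU₂def
          have hU₂core : Core ν n U₂ := by
            refine (hU.sub (p := (i', c)) (S := ∅) (by simp)).fill
              ⟨by omega, hu2n⟩ (fun _ => hpar0) ?_ ?_ ?_ ?_
            · intro y hy hby a ha
              rw [updF_ne _ _ (pair_ne_fst (by omega))] at ha
              have h1 := hDl y hy hby a ha
              have hau : a ≤ u := by omega
              rcases eq_or_lt_of_le hau with he | hl
              · exact Or.inr ⟨he, by omega⟩
              · exact Or.inl hl
            · intro hbR b hbmem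
              rw [updF_ne _ _ (pair_ne_fst (by omega))] at hbmem
              rw [hUR, Finset.mem_singleton] at hbmem
              exact Or.inl (by omega)
            · intro x hx hbx a ha
              have hxi : x = i' := by omega
              subst hxi
              rw [updF_same] at ha
              exact absurd ha (Finset.notMem_empty a)
            · intro hbA b hbmem
              rw [updF_ne _ _ (pair_ne_fst (by omega))] at hbmem
              exact Or.inl (hG hpar0 hbA b hbmem)
          have hU₂below : U₂ (i', c) = ∅ := by
            rw [hU₂def, updF_ne _ _ (pair_ne_fst (by omega)), updF_same]
          have hU₂hole : U₂ (i' + 1, c) = {u} := by rw [hU₂def, updF_same]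
          have hU₂other : ∀ q : ℕ × ℕ, q ≠ (i', c) → q ≠ (i' + 1, c) → U₂ q = U q := by
            intro q h1 h2
            rw [hU₂def, updF_ne _ _ h2, updF_ne _ _ h1]
          obtain ⟨U', hne', hcore', hdeg'⟩ := ih (i' + c) (by omega) i' c U₂ (u - 1)
            (le_refl _) hU₂core
            (by
              intro x y hbxy hq
              by_cases hq2 : (x, y) = (i' + 1, c)
              · rw [hq2, hU₂hole]; exact ⟨u, Finset.mem_singleton_self u⟩
              · rw [hU₂other _ hq hq2]; exact hne x y hbxy hq2)
            hboxB hU₂below (by omega) (by omega)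
            (by
              intro _
              refine ⟨hbox, ?_⟩
              rw [hU₂hole]
              congr 1
              omega)
            (fun hh => absurd hh (by omega))
            (by
              intro _ hbR' b hbmem
              rw [hU₂other _ (pair_ne_snd (by omega)) (pair_ne_snd (by omega))] at hbmem
              have h1 := hU.row i' c hboxB hbR' u (by rw [hsing]; exact Finset.mem_singleton_self u) b hbmem
              rcases h1 with h1 | ⟨he, hp⟩ <;> omega)
            (fun hh => absurd hh (by omega))
            (by
              intro y hy hby a ha
              rw [hU₂other _ (pair_ne_snd (by omega)) (pair_ne_snd (by omega))] at ha
              have h1 := hU.row i' y hby (by rw [hy]; exact hboxB) a ha u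
                (by rw [hy, hsing]; exact Finset.mem_singleton_self u)
              rcases h1 with h1 | ⟨he, hp⟩ <;> omega)
            (by
              intro x hx hbx a ha
              rw [hU₂other _ (pair_ne_fst (by omega)) (pair_ne_fst (by omega))] at ha
              have h1 := hU.col x c hbx (by rw [hx]; exact hboxB) a ha u
                (by rw [hx, hsing]; exact Finset.mem_singleton_self u)
              rcases h1 with h1 | ⟨he, hp⟩ <;> omega)
          refine ⟨U', hne', hcore', ?_⟩
          have hdA := tabDeg_updF (ν := ν) (L := Λ) U i' c
            (lt_of_lt_of_le (row_lt h hboxB) hΛ) hboxB.1 hboxB.2 (∅ : Finset ℕ)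
          have hdB := tabDeg_updF (ν := ν) (L := Λ) (updF U (i', c) ∅) (i' + 1) c hiΛ hb1 hb2
            ({u} : Finset ℕ)
          rw [updF_ne _ _ hne_holes, hhole] at hdB
          rw [hsing] at hdA
          simp only [Finset.card_empty, Finset.card_singleton] at hdA hdB
          rw [← hU₂def] at hdB
          omega
        · -- REMOVE the conflicting entry below, then fill
          have hne_holes : ((i' : ℕ) + 1, c) ≠ ((i' : ℕ), c) := pair_ne_fst (by omega)
          have hernon : ((U (i', c)).erase u).Nonempty := by
            have hex : ∃ w ∈ U (i', c), w ≠ u := by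
              by_contra hall
              push_neg at hall
              exact hsing (Finset.eq_singleton_iff_unique_mem.mpr ⟨hmem, hall⟩)
            obtain ⟨w, hw1, hw2⟩ := hex
            exact ⟨w, Finset.mem_erase.mpr ⟨hw2, hw1⟩⟩
          set U₁ : ℕ × ℕ → Finset ℕ := updF U (i', c) ((U (i', c)).erase u) with hU₁def
          refine ⟨updF U₁ (i' + 1, c) {u}, ?_, ?_, ?_⟩
          · intro x y hbxy
            by_cases hq : (x, y) = (i' + 1, c)
            · rw [hq, updF_same]; exact ⟨u, Finset.mem_singleton_self u⟩
            · rw [updF_ne _ _ hq]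
              by_cases hq2 : (x, y) = (i', c)
              · rw [hU₁def, hq2, updF_same]; exact hernon
              · rw [hU₁def, updF_ne _ _ hq2]; exact hne x y hbxy hq
          · refine (hU.sub (p := ((i' : ℕ), c)) (Finset.erase_subset _ _)).fill
              ⟨by omega, hu2n⟩ (fun _ => hpar0) ?_ ?_ ?_ ?_
            · intro y hy hby a ha
              rw [updF_ne _ _ (pair_ne_fst (by omega))] at ha
              have h1 := hDl y hy hby a ha
              have hau : a ≤ u := by omega
              rcases eq_or_lt_of_le hau with he | hl
              · exact Or.inr ⟨he, by omega⟩
              · exact Or.inl hl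
            · intro hbR b hbmem
              rw [updF_ne _ _ (pair_ne_fst (by omega))] at hbmem
              rw [hUR, Finset.mem_singleton] at hbmem
              exact Or.inl (by omega)
            · intro x hx hbx a ha
              have hxi : x = i' := by omega
              subst hxi
              rw [updF_same] at ha
              obtain ⟨hav, ha'⟩ := Finset.mem_erase.mp ha
              exact Or.inl (hconf a ha' hav)
            · intro hbA b hbmem
              rw [updF_ne _ _ (pair_ne_fst (by omega))] at hbmem
              exact Or.inl (hG hpar0 hbA b hbmem)
          · have hdA := tabDeg_updF (ν := ν) (L := Λ) U i' c
              (lt_of_lt_of_le (row_lt h hboxB) hΛ) hboxB.1 hboxB.2 ((U (i', c)).erase u)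
            have hdB := tabDeg_updF (ν := ν) (L := Λ) U₁ (i' + 1) c hiΛ hb1 hb2 ({u} : Finset ℕ)
            have hU₁hole : U₁ (i' + 1, c) = U (i' + 1, c) := by
              rw [hU₁def, updF_ne _ _ hne_holes]
            rw [hU₁hole, hhole] at hdB
            have hcard := Finset.card_erase_of_mem hmem
            have hpos : 0 < (U (i', c)).card := Finset.card_pos.mpr ⟨u, hmem⟩
            simp only [Finset.card_empty, Finset.card_singleton] at hdA hdB
            rw [← hU₁def] at hdA
            omega
      · -- no conflict below
        refine hdone ?_
        intro x hx hbx a ha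
        have hxi : x = i' := by omega
        subst hxi
        exact hconf a ha (fun he => hmem (he ▸ ha))

end Stmt3Aux

namespace Stmt3Aux

variable {ν : ℕ → ℕ} {L L' n Λ r : ℕ}

/-- Adding one box at the end of row `r` (with a repair cascade if necessary). -/
lemma one_box (h : IsStrictPartitionOf ν L) (h' : IsStrictPartitionOf (updN ν r (ν r + 1)) L')
    (hLL' : L ≤ L') (hrL' : r < L') (hL'Λ : L' ≤ Λ) (hrn : r + 1 ≤ n)
    (U : ℕ × ℕ → Finset ℕ)
    (hne : ∀ x y, ShiftedBox ν x y → (U (x, y)).Nonempty)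
    (hU : Core ν n U) :
    ∃ U', (∀ x y, ShiftedBox (updN ν r (ν r + 1)) x y → (U' (x, y)).Nonempty) ∧
      Core (updN ν r (ν r + 1)) n U' ∧
      tabDeg ν Λ U ≤ tabDeg (updN ν r (ν r + 1)) Λ U' := by
  set ν' : ℕ → ℕ := updN ν r (ν r + 1) with hν'def
  set j : ℕ := r + ν r with hjdef
  have hΛr : r < Λ := lt_of_lt_of_le hrL' hL'Λ
  have hbox_iff : ∀ x y, ShiftedBox ν' x y ↔ (ShiftedBox ν x y ∨ (x = r ∧ y = j)) := by
    intro x y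
    by_cases hx : x = r
    · subst hx
      simp only [ShiftedBox, hν'def, updN_same, hjdef, true_and]
      omega
    · simp only [ShiftedBox, hν'def, updN_ne ν _ hx]
      constructor
      · intro hh; exact Or.inl hh
      · intro hh
        rcases hh with hh | ⟨hh, _⟩
        · exact hh
        · exact absurd hh hx
  have hbox_old : ∀ x y, ShiftedBox ν' x y → (x, y) ≠ (r, j) → ShiftedBox ν x y := by
    intro x y hb hq
    rcases (hbox_iff x y).mp hb with h1 | ⟨hx, hy⟩
    · exact h1
    · exact absurd (by rw [hx, hy]) hq
  have hbox_new' : ∀ x y, ShiftedBox ν x y → ShiftedBox ν' x y :=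
    fun x y hb => (hbox_iff x y).mpr (Or.inl hb)
  have hbox_new : ShiftedBox ν' r j := (hbox_iff r j).mpr (Or.inr ⟨rfl, rfl⟩)
  have hCore' : Core ν' n (updF U (r, j) ∅) := by
    constructor
    · intro x y hb a ha
      by_cases hq : (x, y) = (r, j)
      · rw [hq, updF_same] at ha; exact absurd ha (Finset.notMem_empty a)
      · rw [updF_ne _ _ hq] at ha; exact hU.bounded x y (hbox_old x y hb hq) a ha
    · intro x y hb hb' a ha b hbm
      by_cases hq : (x, y) = (r, j)
      · rw [hq, updF_same] at ha; exact absurd ha (Finset.notMem_empty a)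
      · by_cases hq2 : (x, y + 1) = (r, j)
        · rw [hq2, updF_same] at hbm; exact absurd hbm (Finset.notMem_empty b)
        · rw [updF_ne _ _ hq] at ha; rw [updF_ne _ _ hq2] at hbm
          exact hU.row x y (hbox_old x y hb hq) (hbox_old x (y + 1) hb' hq2) a ha b hbm
    · intro x y hb hb' a ha b hbm
      by_cases hq : (x, y) = (r, j)
      · rw [hq, updF_same] at ha; exact absurd ha (Finset.notMem_empty a)
      · by_cases hq2 : (x + 1, y) = (r, j)
        · rw [hq2, updF_same] at hbm; exact absurd hbm (Finset.notMem_empty b)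
        · rw [updF_ne _ _ hq] at ha; rw [updF_ne _ _ hq2] at hbm
          exact hU.col x y (hbox_old x y hb hq) (hbox_old (x + 1) y hb' hq2) a ha b hbm
    · intro x hb a ha
      by_cases hq : (x, x) = (r, j)
      · rw [hq, updF_same] at ha; exact absurd ha (Finset.notMem_empty a)
      · rw [updF_ne _ _ hq] at ha; exact hU.diag x (hbox_old x x hb hq) a ha
  -- generic fill of the new box with 2n
  have hfill_aux : ∀ (W : ℕ × ℕ → Finset ℕ), Core ν' n W →
      (∀ x, x + 1 = r → ShiftedBox ν' x j → ∀ a ∈ W (x, j), a < 2 * n ∨ (a = 2 * n ∧ a % 2 = 1)) →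
      (∀ y, y + 1 = j → W (r, y) = U (r, y)) →
      Core ν' n (updF W (r, j) {2 * n}) := by
    intro W hW hcolB hWL
    refine hW.fill ⟨by omega, le_refl _⟩ (fun _ => by omega) ?_ ?_ hcolB ?_
    · intro y hy hby a ha
      rw [hWL y hy] at ha
      have hbν : ShiftedBox ν r y := hbox_old r y hby (pair_ne_snd (by omega))
      have hbd := (hU.bounded r y hbν a ha).2
      rcases eq_or_lt_of_le hbd with he | hl
      · exact Or.inr ⟨he, by omega⟩
      · exact Or.inl hl
    · intro hb
      exfalso
      have h2 := hb.2
      rw [hν'def, updN_same] at h2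
      omega
    · intro hb
      exfalso
      have h1 := hb.1
      have h2 := hb.2
      rw [hν'def, updN_ne ν _ (by omega : r + 1 ≠ r)] at h2
      by_cases hrL : r + 1 < L
      · have := h.1 r hrL
        omega
      · have := h.2.2 (r + 1) (by omega)
        omega
  -- the "no-conflict" completion
  have hdone : (∀ x, x + 1 = r → ShiftedBox ν' x j → ∀ a ∈ U (x, j), a < 2 * n ∨ (a = 2 * n ∧ a % 2 = 1)) →
      ∃ U', (∀ x y, ShiftedBox ν' x y → (U' (x, y)).Nonempty) ∧ Core ν' n U' ∧
        tabDeg ν Λ U ≤ tabDeg ν' Λ U' := by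
    intro hbelow
    refine ⟨updF (updF U (r, j) ∅) (r, j) {2 * n}, ?_, ?_, ?_⟩
    · intro x y hb
      by_cases hq : (x, y) = (r, j)
      · rw [hq, updF_same]; exact ⟨2 * n, Finset.mem_singleton_self _⟩
      · rw [updF_ne _ _ hq, updF_ne _ _ hq]; exact hne x y (hbox_old x y hb hq)
    · refine hfill_aux _ hCore' ?_ ?_
      · intro x hx hbx a ha
        rw [updF_ne _ _ (pair_ne_fst (by omega))] at ha
        exact hbelow x hx hbx a ha
      · intro y hy
        exact updF_ne _ _ (pair_ne_snd (by omega))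
    · rw [updF_idem]
      have hd1 := tabDeg_updF (ν := ν') (L := Λ) U r j hΛr (by omega)
        (by rw [hν'def, updN_same]; omega) ({2 * n} : Finset ℕ)
      have hd2 := tabDeg_shape_succ (ν := ν) (L := Λ) hΛr U
      rw [← hν'def, ← hjdef] at hd2
      simp only [Finset.card_singleton] at hd1
      omega
  rcases r with _ | r''
  · -- r = 0 : no box below the new box
    exact hdone (fun x hx _ => absurd hx (by omega))
  · set r : ℕ := r'' + 1 with hrdef
    have hboxD : ShiftedBox ν r'' j := by
      have hstr := h'.1 r'' (by omega)
      rw [hν'def, updN_same, updN_ne ν _ (by omega : r'' ≠ r)] at hstr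
      exact ⟨by omega, by omega⟩
    by_cases hmem : 2 * n ∈ U (r'', j)
    · by_cases hsing : U (r'', j) = {2 * n}
      · -- cascade
        set X : ℕ × ℕ → Finset ℕ := updF U (r, j) ∅ with hXdef
        set Y : ℕ × ℕ → Finset ℕ := updF X (r'', j) ∅ with hYdef
        set U₂ : ℕ × ℕ → Finset ℕ := updF Y (r, j) {2 * n} with hU₂def
        have hYcore : Core ν' n Y := hCore'.sub (by simp)
        have hU₂core : Core ν' n U₂ := by
          refine hfill_aux Y hYcore ?_ ?_
          · intro x hx hbx a ha
            have hxr : x = r'' := by omega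
            subst hxr
            rw [hYdef, updF_same] at ha
            exact absurd ha (Finset.notMem_empty a)
          · intro y hy
            rw [hYdef, updF_ne _ _ (pair_ne_snd (by omega)),
              hXdef, updF_ne _ _ (pair_ne_snd (by omega))]
        have hU₂other : ∀ q : ℕ × ℕ, q ≠ (r, j) → q ≠ (r'', j) → U₂ q = U q := by
          intro q h1 h2
          rw [hU₂def, updF_ne _ _ h1, hYdef, updF_ne _ _ h2, hXdef, updF_ne _ _ h1]
        have hU₂top : U₂ (r, j) = {2 * n} := by rw [hU₂def, updF_same]
        have hU₂hole : U₂ (r'', j) = ∅ := by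
          rw [hU₂def, updF_ne _ _ (pair_ne_fst (by omega)), hYdef, updF_same]
        have h2nmem : (2 * n : ℕ) ∈ U (r'', j) := hmem
        obtain ⟨U', hne', hcore', hdeg'⟩ := fill_rec (ν := ν') (n := n) h' hL'Λ
          (r'' + j) r'' j U₂ (2 * n - 1) (le_refl _) hU₂core
          (by
            intro x y hb hq
            by_cases hq2 : (x, y) = (r, j)
            · rw [hq2, hU₂top]; exact ⟨2 * n, Finset.mem_singleton_self _⟩
            · rw [hU₂other _ hq2 hq]; exact hne x y (hbox_old x y hb hq2))
          (hbox_new' _ _ hboxD) hU₂hole (by omega) (by omega)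
          (by
            intro _
            refine ⟨hbox_new, ?_⟩
            rw [hU₂top]
            congr 1
            omega)
          (fun hh => absurd hh (by omega))
          (by
            intro _ hbR b hbmem
            have hbRν : ShiftedBox ν r'' (j + 1) := hbox_old _ _ hbR (pair_ne_fst (by omega))
            rw [hU₂other _ (pair_ne_fst (by omega)) (pair_ne_snd (by omega))] at hbmem
            have h1 := hU.row r'' j hboxD hbRν (2 * n)
              (by rw [hsing]; exact Finset.mem_singleton_self _) b hbmem
            rcases h1 with h1 | ⟨he, hp⟩ <;> omega)
          (fun hh => absurd hh (by omega))
          (by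
            intro y hy hby a ha
            have hbyν : ShiftedBox ν r'' y := hbox_old _ _ hby (pair_ne_fst (by omega))
            rw [hU₂other _ (pair_ne_fst (by omega)) (pair_ne_snd (by omega))] at ha
            have := (hU.bounded r'' y hbyν a ha).2
            omega)
          (by
            intro x hx hbx a ha
            have hbxν : ShiftedBox ν x j := hbox_old _ _ hbx (pair_ne_fst (by omega))
            rw [hU₂other _ (pair_ne_fst (by omega)) (pair_ne_fst (by omega))] at ha
            have h1 := hU.col x j hbxν (by rw [hx]; exact hboxD) a ha (2 * n)
              (by rw [hx, hsing]; exact Finset.mem_singleton_self _)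
            rcases h1 with h1 | ⟨he, hp⟩ <;> omega)
        refine ⟨U', hne', hcore', ?_⟩
        have hd1 := tabDeg_updF (ν := ν') (L := Λ) U r j hΛr (by omega)
          (by rw [hν'def, updN_same]; omega) (∅ : Finset ℕ)
        have hd2 := tabDeg_updF (ν := ν') (L := Λ) X r'' j
          (by omega : r'' < Λ) hboxD.1
          (by rw [hν'def, updN_ne ν _ (by omega : r'' ≠ r)]; exact hboxD.2) (∅ : Finset ℕ)
        have hd3 := tabDeg_updF (ν := ν') (L := Λ) Y r j hΛr (by omega)
          (by rw [hν'def, updN_same]; omega) ({2 * n} : Finset ℕ)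
        have hd4 := tabDeg_shape_succ (ν := ν) (L := Λ) hΛr U
        rw [← hν'def, ← hjdef] at hd4
        rw [← hXdef] at hd1
        rw [← hYdef] at hd2
        rw [← hU₂def] at hd3
        have hX1 : X (r'', j) = U (r'', j) := by
          rw [hXdef, updF_ne _ _ (pair_ne_fst (by omega))]
        have hY1 : Y (r, j) = ∅ := by
          rw [hYdef, updF_ne _ _ (pair_ne_fst (by omega)), hXdef, updF_same]
        rw [hX1, hsing] at hd2
        rw [hY1] at hd3
        simp only [Finset.card_singleton, Finset.card_empty] at hd1 hd2 hd3
        omega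
      · -- remove the conflicting 2n from below, then fill
        have hernon : ((U (r'', j)).erase (2 * n)).Nonempty := by
          have hex : ∃ w ∈ U (r'', j), w ≠ 2 * n := by
            by_contra hall
            push_neg at hall
            exact hsing (Finset.eq_singleton_iff_unique_mem.mpr ⟨hmem, hall⟩)
          obtain ⟨w, hw1, hw2⟩ := hex
          exact ⟨w, Finset.mem_erase.mpr ⟨hw2, hw1⟩⟩
        set X : ℕ × ℕ → Finset ℕ := updF U (r, j) ∅ with hXdef
        set Y : ℕ × ℕ → Finset ℕ := updF X (r'', j) ((U (r'', j)).erase (2 * n)) with hYdef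
        refine ⟨updF Y (r, j) {2 * n}, ?_, ?_, ?_⟩
        · intro x y hb
          by_cases hq : (x, y) = (r, j)
          · rw [hq, updF_same]; exact ⟨2 * n, Finset.mem_singleton_self _⟩
          · rw [updF_ne _ _ hq]
            by_cases hq2 : (x, y) = (r'', j)
            · rw [hYdef, hq2, updF_same]; exact hernon
            · rw [hYdef, updF_ne _ _ hq2, hXdef, updF_ne _ _ hq]
              exact hne x y (hbox_old x y hb hq)
        · have hYcore : Core ν' n Y := by
            refine hCore'.sub ?_
            rw [hXdef, updF_ne _ _ (pair_ne_fst (by omega))]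
            exact Finset.erase_subset _ _
          refine hfill_aux Y hYcore ?_ ?_
          · intro x hx hbx a ha
            have hxr : x = r'' := by omega
            subst hxr
            rw [hYdef, updF_same] at ha
            obtain ⟨hane, ha'⟩ := Finset.mem_erase.mp ha
            have hbxν : ShiftedBox ν x j := hbox_old _ _ hbx (pair_ne_fst (by omega))
            have := (hU.bounded x j hbxν a ha').2
            exact Or.inl (by omega)
          · intro y hy
            rw [hYdef, updF_ne _ _ (pair_ne_snd (by omega)),
              hXdef, updF_ne _ _ (pair_ne_snd (by omega))]
        · have hd1 := tabDeg_updF (ν := ν') (L := Λ) U r j hΛr (by omega)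
            (by rw [hν'def, updN_same]; omega) (∅ : Finset ℕ)
          have hd2 := tabDeg_updF (ν := ν') (L := Λ) X r'' j
            (by omega : r'' < Λ) hboxD.1
            (by rw [hν'def, updN_ne ν _ (by omega : r'' ≠ r)]; exact hboxD.2)
            ((U (r'', j)).erase (2 * n))
          have hd3 := tabDeg_updF (ν := ν') (L := Λ) Y r j hΛr (by omega)
            (by rw [hν'def, updN_same]; omega) ({2 * n} : Finset ℕ)
          have hd4 := tabDeg_shape_succ (ν := ν) (L := Λ) hΛr U
          rw [← hν'def, ← hjdef] at hd4
          rw [← hXdef] at hd1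
          rw [← hYdef] at hd2
          have hX1 : X (r'', j) = U (r'', j) := by
            rw [hXdef, updF_ne _ _ (pair_ne_fst (by omega))]
          have hY1 : Y (r, j) = ∅ := by
            rw [hYdef, updF_ne _ _ (pair_ne_fst (by omega)), hXdef, updF_same]
          rw [hX1] at hd2
          rw [hY1] at hd3
          have hcard := Finset.card_erase_of_mem hmem
          have hpos : 0 < (U (r'', j)).card := Finset.card_pos.mpr ⟨2 * n, hmem⟩
          simp only [Finset.card_singleton, Finset.card_empty] at hd1 hd2 hd3
          omega
    · -- no conflict below
      refine hdone ?_
      intro x hx hbx a ha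
      have hxr : x = r'' := by omega
      subst hxr
      have hbxν : ShiftedBox ν x j := hbox_old _ _ hbx (pair_ne_fst (by omega))
      have := (hU.bounded x j hbxν a ha).2
      have hane : a ≠ 2 * n := fun he => hmem (he ▸ ha)
      exact Or.inl (by omega)

end Stmt3Aux


namespace Stmt3Aux

lemma lam_chain {lam : ℕ → ℕ} {Llam : ℕ} (hlam : IsStrictPartitionOf lam Llam)
    {i i' : ℕ} (hii : i ≤ i') (hi' : i' < Llam) : lam i' + (i' - i) ≤ lam i := by
  have h1 := edge_mono hlam (i := i) (k := i' - i) (by omega)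
  have e : i + (i' - i) = i' := by omega
  rw [e] at h1
  omega

lemma extend_many {lam : ℕ → ℕ} {Llam n : ℕ}
    (hlam : IsStrictPartitionOf lam Llam) (hn : Llam ≤ n) :
    ∀ m (mu : ℕ → ℕ) (Lmu : ℕ), IsStrictPartitionOf mu Lmu → Subpartition mu lam →
    (∑ i ∈ Finset.range Llam, (lam i - mu i)) = m →
    ∀ U : ℕ × ℕ → Finset ℕ, (∀ x y, ShiftedBox mu x y → (U (x, y)).Nonempty) →
    Core mu n U →
    ∃ U', (∀ x y, ShiftedBox lam x y → (U' (x, y)).Nonempty) ∧ Core lam n U' ∧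
      tabDeg mu Llam U ≤ tabDeg lam Llam U' := by
  intro m
  induction m with
  | zero =>
    intro mu Lmu hmu hsub hsum U hne hU
    have heq : mu = lam := by
      funext x
      by_cases hx : x < Llam
      · have h0 : lam x - mu x = 0 := by
          by_contra hc
          have hmem : x ∈ Finset.range Llam := Finset.mem_range.mpr hx
          have hpos : 0 < ∑ i ∈ Finset.range Llam, (lam i - mu i) :=
            Finset.sum_pos' (fun i _ => Nat.zero_le _) ⟨x, hmem, by omega⟩
          omega
        have := hsub x
        omega
      · have h1 := hlam.2.2 x (by omega)
        have h2 := hsub x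
        omega
    subst heq
    exact ⟨U, hne, hU, le_refl _⟩
  | succ m ihm =>
    intro mu Lmu hmu hsub hsum U hne hU
    have hex : ∃ i, mu i < lam i := by
      by_contra hall
      push_neg at hall
      have hz : ∀ i ∈ Finset.range Llam, lam i - mu i = 0 := fun i _ => by
        have := hall i; omega
      rw [Finset.sum_eq_zero hz] at hsum
      omega
    set r := Nat.find hex with hrdef
    have hr : mu r < lam r := Nat.find_spec hex
    have hrmin : ∀ i, i < r → ¬ (mu i < lam i) := fun i hi => Nat.find_min hex hi
    have hreq : ∀ i, i < r → mu i = lam i := by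
      intro i hi
      have h1 := hrmin i hi
      have h2 := hsub i
      omega
    have hrL : r < Llam := by
      by_contra hc
      have := hlam.2.2 r (by omega)
      omega
    set mu' : ℕ → ℕ := updN mu r (mu r + 1) with hmu'def
    have hmusub : Subpartition mu' lam := by
      intro i
      by_cases hi : i = r
      · subst hi; rw [hmu'def, updN_same]; omega
      · rw [hmu'def, updN_ne mu _ hi]; exact hsub i
    have hLmuLlam : Lmu ≤ Llam := by
      by_contra hc
      have h1 := hmu.2.1 Llam (by omega)
      have h2 := hsub Llam
      have h3 := hlam.2.2 Llam (le_refl _)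
      omega
    obtain ⟨Lmu', hmu', hrLmu', hLmu', hLLmu'⟩ :
        ∃ Lmu', IsStrictPartitionOf mu' Lmu' ∧ r < Lmu' ∧ Lmu' ≤ Llam ∧ Lmu ≤ Lmu' := by
      by_cases h0 : mu r = 0
      · have hrLmu : Lmu ≤ r := by
          by_contra hc
          have := hmu.2.1 r (by omega)
          omega
        have hrLmu2 : r = Lmu := by
          by_contra hc
          have h1 : Lmu < r := by omega
          have h2 := hmu.2.2 Lmu (le_refl _)
          have h3 := hrmin Lmu h1
          have h4 := hlam.2.1 Lmu (by omega)
          omega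
        refine ⟨r + 1, ⟨?_, ?_, ?_⟩, by omega, by omega, by omega⟩
        · intro i hi
          have hir : i + 1 ≤ r := by omega
          rcases eq_or_lt_of_le hir with he | hl
          · have e1 : mu' (i + 1) = mu r + 1 := by rw [hmu'def, he, updN_same]
            have e2 : mu' i = mu i := by
              rw [hmu'def]; exact updN_ne mu _ (by omega)
            have e3 := hreq i (by omega)
            have e4 := lam_chain hlam (show i ≤ r by omega) hrL
            omega
          · have e1 : mu' (i + 1) = mu (i + 1) := by
              rw [hmu'def]; exact updN_ne mu _ (by omega)
            have e2 : mu' i = mu i := by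
              rw [hmu'def]; exact updN_ne mu _ (by omega)
            have := hmu.1 i (by omega)
            omega
        · intro i hi
          by_cases h2 : i = r
          · subst h2; rw [hmu'def, updN_same]; omega
          · rw [hmu'def, updN_ne mu _ h2]
            exact hmu.2.1 i (by omega)
        · intro i hi
          rw [hmu'def, updN_ne mu _ (by omega)]
          exact hmu.2.2 i (by omega)
      · have hrLmu : r < Lmu := by
          by_contra hc
          have := hmu.2.2 r (by omega)
          omega
        refine ⟨Lmu, ⟨?_, ?_, ?_⟩, hrLmu, hLmuLlam, le_refl _⟩
        · intro i hi
          by_cases h1 : i + 1 = r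
          · have e1 : mu' (i + 1) = mu r + 1 := by rw [hmu'def, h1, updN_same]
            have e2 : mu' i = mu i := by
              rw [hmu'def]; exact updN_ne mu _ (by omega)
            have e3 := hreq i (by omega)
            have e4 := lam_chain hlam (show i ≤ r by omega) hrL
            omega
          · by_cases h2 : i = r
            · have e1 : mu' (i + 1) = mu (i + 1) := by
                rw [hmu'def]; exact updN_ne mu _ (by omega)
              have e2 : mu' i = mu i + 1 := by rw [hmu'def, h2, updN_same]
              have := hmu.1 i hi
              omega
            · have e1 : mu' (i + 1) = mu (i + 1) := by
                rw [hmu'def]; exact updN_ne mu _ (by omega)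
              have e2 : mu' i = mu i := by
                rw [hmu'def]; exact updN_ne mu _ h2
              have := hmu.1 i hi
              omega
        · intro i hi
          by_cases h2 : i = r
          · subst h2; rw [hmu'def, updN_same]; omega
          · rw [hmu'def, updN_ne mu _ h2]; exact hmu.2.1 i hi
        · intro i hi
          rw [hmu'def, updN_ne mu _ (by omega)]
          exact hmu.2.2 i hi
    obtain ⟨U'', hne'', hU'', hdeg''⟩ := one_box (Λ := Llam) hmu hmu' hLLmu' hrLmu'
      hLmu' (by omega) U hne hU
    have hsum' : (∑ i ∈ Finset.range Llam, (lam i - mu' i)) = m := by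
      have hrmem : r ∈ Finset.range Llam := Finset.mem_range.mpr hrL
      rw [← Finset.add_sum_erase _ _ hrmem]
      rw [← Finset.add_sum_erase _ (fun i => lam i - mu i) hrmem] at hsum
      have herase : ∑ i ∈ (Finset.range Llam).erase r, (lam i - mu' i)
          = ∑ i ∈ (Finset.range Llam).erase r, (lam i - mu i) :=
        Finset.sum_congr rfl fun i hi => by
          rw [hmu'def, updN_ne mu _ (Finset.mem_erase.mp hi).1]
      rw [herase]
      have e1 : mu' r = mu r + 1 := by rw [hmu'def, updN_same]
      rw [e1]
      omega
    obtain ⟨U', hne', hU', hdeg'⟩ := ihm mu' Lmu' hmu' hmusub hsum' U'' hne'' hU''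
    exact ⟨U', hne', hU', le_trans hdeg'' hdeg'⟩

end Stmt3Aux

/-- if `mu ⊆ lam` are strict partitions (of lengths `Lmu`, `Llam`) and
`n ≥ ℓ(lam)`, then every `P`-shifted set-valued tableau of shape `mu` with entries at
most `n` admits a `P`-shifted set-valued tableau of shape `lam` of weakly larger degree. -/
theorem stmt3 (mu lam : ℕ → ℕ) (Lmu Llam : ℕ)
    (hmu : IsStrictPartitionOf mu Lmu) (hlam : IsStrictPartitionOf lam Llam)
    (hsub : Subpartition mu lam) (n : ℕ) (hn : Llam ≤ n)
    (T : PSVT mu n) :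
    ∃ T' : PSVT lam n, tabDeg mu Lmu T.T ≤ tabDeg lam Llam T'.T := by
  classical
  obtain ⟨U', hne', hcore', hdeg'⟩ := Stmt3Aux.extend_many hlam hn
    (∑ i ∈ Finset.range Llam, (lam i - mu i)) mu Lmu hmu hsub rfl T.T
    (fun x y hb => T.nonempty x y hb) ⟨T.bounded, T.row, T.col, T.diag⟩
  refine ⟨⟨U', fun i j hb => hne' i j hb, hcore'.bounded, hcore'.row, hcore'.col,
    hcore'.diag⟩, ?_⟩
  show tabDeg mu Lmu T.T ≤ tabDeg lam Llam U'
  rcases le_total Lmu Llam with hLL | hLL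
  · have he := Stmt3Aux.tabDeg_congr_len (ν := mu) hLL
      (fun i h1 _ => hmu.2.2 i h1) T.T
    omega
  · have he := Stmt3Aux.tabDeg_congr_len (ν := mu) hLL
      (fun i h1 _ => by have h2 := hsub i; have h3 := hlam.2.2 i h1; omega) T.T
    omega
end

section
/- For any D-partition Δ of length ℓ and any n ≥ ℓ, the tableau M_{Δ,n} (filling each non-rightmost box of row i with {i}, the rightmost box of row i with the primed-alphabet interval [i,n] (or the unprimed interval [ℓ,n] in the top row when Δ_ℓ = 1)) achieves the maximum degree among all P-shifted set-valued tableaux of shape Δ with entries at most n. -/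
/-- The maximal tableau `M_{Δ,n}` of D-partition shape `Δ` (with `ℓ` rows): each
non-rightmost box of row `i` (0-indexed; row `i+1` of the paper) is filled with `{i+1}`
(encoded `2*(i+1)`), the rightmost box of row `i` receives the primed-alphabet
interval from unprimed `i+1` to unprimed `n` (encoded `Finset.Icc (2*(i+1)) (2*n)`),
except that when the top row consists of a single box on the main diagonal
(`Δ_ℓ = 1`) that box receives the unprimed interval `[ℓ, n]`
(encoded as the even numbers `2*ℓ, ..., 2*n`). -/
def Mtab (lam : ℕ → ℕ) (ℓ n : ℕ) : ℕ × ℕ → Finset ℕ := fun p =>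
  if p.2 + 1 = p.1 + lam p.1 then
    (if p.1 + 1 = ℓ ∧ lam p.1 = 1 then (Finset.Icc ℓ n).image (fun k => 2 * k)
     else Finset.Icc (2 * (p.1 + 1)) (2 * n))
  else {2 * (p.1 + 1)}


section Aux

lemma card_add_min_le (S : Finset ℕ) (h : S.Nonempty) :
    S.card + S.min' h ≤ S.max' h + 1 := by
  have hsub : S ⊆ Finset.Icc (S.min' h) (S.max' h) := fun a ha =>
    Finset.mem_Icc.mpr ⟨S.min'_le a ha, S.le_max' a ha⟩
  have h1 := Finset.card_le_card hsub
  have h2 := S.min'_le _ (S.max'_mem h)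
  rw [Nat.card_Icc] at h1
  omega

lemma even_card_bound (S : Finset ℕ) (m n : ℕ)
    (h : ∀ a ∈ S, a % 2 = 0 ∧ 2 * m ≤ a ∧ a ≤ 2 * n) :
    S.card ≤ n + 1 - m := by
  have hsub : S ⊆ (Finset.Icc m n).image (fun k => 2 * k) := by
    intro a ha
    obtain ⟨he, h1, h2⟩ := h a ha
    exact Finset.mem_image.mpr ⟨a / 2, Finset.mem_Icc.mpr ⟨by omega, by omega⟩, by omega⟩
  calc S.card ≤ _ := Finset.card_le_card hsub
    _ ≤ (Finset.Icc m n).card := Finset.card_image_le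
    _ = n + 1 - m := Nat.card_Icc m n

lemma diag_lb {Δ : ℕ → ℕ} {ℓ n : ℕ} (hD : IsDPartitionOf Δ ℓ) (T : PSVT Δ n) :
    ∀ i, ShiftedBox Δ i i → ∀ a ∈ T.T (i, i), 2 * (i + 1) ≤ a := by
  intro i
  induction i with
  | zero =>
    intro hb a ha
    have he := T.diag 0 hb a ha
    have hbd := (T.bounded 0 0 hb a ha).1
    omega
  | succ i ih =>
    intro hb a ha
    have h1 : 0 < Δ (i + 1) := by have := hb.2; omega
    have hiℓ : i + 1 < ℓ := by
      by_contra h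
      have := hD.2.2 (i + 1) (by omega)
      omega
    have hΔi : Δ (i + 1) + 2 ≤ Δ i := hD.1 i hiℓ
    have hb0 : ShiftedBox Δ i i := ⟨le_refl _, by omega⟩
    have hb1 : ShiftedBox Δ i (i + 1) := ⟨by omega, by omega⟩
    obtain ⟨x, hx⟩ := T.nonempty i i hb0
    obtain ⟨y, hy⟩ := T.nonempty i (i + 1) hb1
    have hxlb := ih hb0 x hx
    have hxy := T.row i i hb0 hb1 x hx y hy
    have hyc := T.col i (i + 1) hb1 hb y hy a ha
    have ha_even := T.diag (i + 1) hb a ha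
    omega

lemma row_telescope {Δ : ℕ → ℕ} {ℓ n : ℕ} (hD : IsDPartitionOf Δ ℓ) (T : PSVT Δ n)
    (i : ℕ) :
    ∀ j, i ≤ j → ∀ hbox : ShiftedBox Δ i j,
      (∑ k ∈ Finset.Ico i (j + 1), (T.T (i, k)).card) + 2 * (i + 1) + i ≤
        (T.T (i, j)).max' (T.nonempty i j hbox) + (j + 1) := by
  intro j hij
  induction j, hij using Nat.le_induction with
  | base =>
    intro hbox
    have hne := T.nonempty i i hbox
    have h1 := card_add_min_le _ hne
    have h2 : 2 * (i + 1) ≤ (T.T (i, i)).min' hne :=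
      diag_lb hD T i hbox _ (Finset.min'_mem _ hne)
    rw [Finset.sum_Ico_succ_top (le_refl i), Finset.Ico_self, Finset.sum_empty]
    omega
  | succ j hij ih =>
    intro hbox
    have hbox' : ShiftedBox Δ i j := ⟨hij, by have := hbox.2; omega⟩
    have hprev := ih hbox'
    have hne' := T.nonempty i j hbox'
    have hne := T.nonempty i (j + 1) hbox
    have hrow := T.row i j hbox' hbox _ (Finset.max'_mem _ hne') _ (Finset.min'_mem _ hne)
    have hcm := card_add_min_le _ hne
    rw [Finset.sum_Ico_succ_top (by omega : i ≤ j + 1)]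
    have hmm : (T.T (i, j)).max' hne' ≤ (T.T (i, j + 1)).min' hne := by
      rcases hrow with h | h <;> omega
    omega

end Aux

/-- for any D-partition `Δ` of length `ℓ` and any `n ≥ ℓ`, the tableau
`M_{Δ,n}` is a valid `P`-shifted set-valued tableau achieving the maximum degree among
all `P`-shifted set-valued tableaux of shape `Δ` with entries at most `n`. -/
theorem stmt5 (Δ : ℕ → ℕ) (ℓ n : ℕ) (hD : IsDPartitionOf Δ ℓ) (hℓ : 0 < ℓ)
    (hn : ℓ ≤ n) :
    ∃ M : PSVT Δ n, M.T = Mtab Δ ℓ n ∧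
      ∀ T : PSVT Δ n, tabDeg Δ ℓ T.T ≤ tabDeg Δ ℓ M.T := by
  have hlen : ∀ i j, ShiftedBox Δ i j → i < ℓ := by
    intro i j hb
    by_contra h
    have := hD.2.2 i (by omega)
    have := hb.1
    have := hb.2
    omega
  refine ⟨⟨Mtab Δ ℓ n, ?_, ?_, ?_, ?_, ?_⟩, rfl, ?_⟩
  · -- nonempty
    intro i j hb
    have hiℓ := hlen i j hb
    simp only [Mtab]
    split_ifs with h1 h2
    · exact (Finset.nonempty_Icc.mpr hn).image _
    · exact Finset.nonempty_Icc.mpr (by omega)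
    · exact Finset.singleton_nonempty _
  · -- bounded
    intro i j hb a ha
    have hiℓ := hlen i j hb
    simp only [Mtab] at ha
    split_ifs at ha with h1 h2
    · obtain ⟨k, hk, rfl⟩ := Finset.mem_image.mp ha
      have hk := Finset.mem_Icc.mp hk
      omega
    · have := Finset.mem_Icc.mp ha
      omega
    · have := Finset.mem_singleton.mp ha
      omega
  · -- row
    intro i j hb1 hb2 a ha b hbm
    have hiℓ := hlen i j hb1
    have hj : j + 1 < i + Δ i := hb2.2
    simp only [Mtab] at ha hbm
    rw [if_neg (by omega)] at ha
    have ha' := Finset.mem_singleton.mp ha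
    split_ifs at hbm with h1 h2
    · have := hb1.1
      omega
    · have := Finset.mem_Icc.mp hbm
      omega
    · have := Finset.mem_singleton.mp hbm
      omega
  · -- col
    intro i j hb1 hb2 a ha b hbm
    have hiℓ := hlen (i + 1) j hb2
    have hΔ : Δ (i + 1) + 2 ≤ Δ i := hD.1 i hiℓ
    have hj : j < i + 1 + Δ (i + 1) := hb2.2
    simp only [Mtab] at ha hbm
    rw [if_neg (by omega)] at ha
    have ha' := Finset.mem_singleton.mp ha
    split_ifs at hbm with h1 h2
    · obtain ⟨k, hk, rfl⟩ := Finset.mem_image.mp hbm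
      have hk := Finset.mem_Icc.mp hk
      omega
    · have := Finset.mem_Icc.mp hbm
      omega
    · have := Finset.mem_singleton.mp hbm
      omega
  · -- diag
    intro i hb a ha
    have hiℓ := hlen i i hb
    simp only [Mtab] at ha
    split_ifs at ha with h1 h2
    · obtain ⟨k, hk, rfl⟩ := Finset.mem_image.mp ha
      omega
    · exfalso
      apply h2
      have hΔ1 : Δ i = 1 := by omega
      constructor
      · by_contra hc
        have := hD.1 i (by omega)
        have := hD.2.1 (i + 1) (by omega)
        omega
      · exact hΔ1
    · have := Finset.mem_singleton.mp ha
      omega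
  · -- maximality
    intro T
    unfold tabDeg
    apply Finset.sum_le_sum
    intro i hi
    have hiℓ := Finset.mem_range.mp hi
    have hΔ : 0 < Δ i := hD.2.1 i hiℓ
    -- compute the Mtab row sum
    have hinner : ∀ j ∈ Finset.Ico i (i + Δ i - 1), (Mtab Δ ℓ n (i, j)).card = 1 := by
      intro j hj
      have hj := Finset.mem_Ico.mp hj
      simp only [Mtab]
      rw [if_neg (by omega)]
      exact Finset.card_singleton _
    have hM : (∑ j ∈ Finset.Ico i (i + Δ i), (Mtab Δ ℓ n (i, j)).card) =
        (Δ i - 1) + (if i + 1 = ℓ ∧ Δ i = 1 then n + 1 - ℓ else 2 * n + 1 - 2 * (i + 1)) := by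
      rw [show i + Δ i = (i + Δ i - 1) + 1 from by omega,
        Finset.sum_Ico_succ_top (by omega : i ≤ i + Δ i - 1),
        Finset.sum_congr rfl hinner, Finset.sum_const, smul_eq_mul, mul_one, Nat.card_Ico]
      congr 1
      · omega
      · simp only [Mtab]
        rw [if_pos (by omega)]
        by_cases hs : i + 1 = ℓ ∧ Δ i = 1
        · rw [if_pos hs, if_pos hs,
            Finset.card_image_of_injective _ (fun a b h => by dsimp at h; omega : Function.Injective (fun k => 2 * k)),
            Nat.card_Icc]
        · rw [if_neg hs, if_neg hs, Nat.card_Icc]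
    show (∑ j ∈ Finset.Ico i (i + Δ i), (T.T (i, j)).card) ≤
      ∑ j ∈ Finset.Ico i (i + Δ i), (Mtab Δ ℓ n (i, j)).card
    rw [hM]
    by_cases hs : i + 1 = ℓ ∧ Δ i = 1
    · rw [if_pos hs]
      -- single diagonal box, even entries
      have hbox : ShiftedBox Δ i i := ⟨le_refl _, by omega⟩
      have hsum : ∑ j ∈ Finset.Ico i (i + Δ i), (T.T (i, j)).card = (T.T (i, i)).card := by
        rw [hs.2, Finset.sum_Ico_succ_top (by omega : i ≤ i), Finset.Ico_self,
          Finset.sum_empty, zero_add]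
      rw [hsum]
      have hb := even_card_bound (T.T (i, i)) (i + 1) n (fun a ha =>
        ⟨T.diag i hbox a ha, diag_lb hD T i hbox a ha, (T.bounded i i hbox a ha).2⟩)
      omega
    · rw [if_neg hs]
      have hbox : ShiftedBox Δ i (i + Δ i - 1) := ⟨by omega, by omega⟩
      have htel := row_telescope hD T i (i + Δ i - 1) (by omega) hbox
      have hmax := (T.bounded i (i + Δ i - 1) hbox _
        (Finset.max'_mem _ (T.nonempty i (i + Δ i - 1) hbox))).2
      rw [show i + Δ i - 1 + 1 = i + Δ i from by omega] at htel
      omega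
end

section
/- For any strict partition λ of length ℓ and any n ≥ ℓ, the difference deg(GQ_{λ,n}) − deg(GP_{λ,n}) lies in the interval [ℓ, n]. In particular, if n = ℓ then deg(GQ_{λ,n}) = deg(GP_{λ,n}) + n. -/
section Aux10

variable {lam : ℕ → ℕ} {ℓ n : ℕ}

/-- Forget the diagonal condition. -/
def PSVT.toQSVT (P : PSVT lam n) : QSVT lam n := ⟨P.T, P.nonempty, P.bounded, P.row, P.col⟩

lemma aux_box_diag (h : IsStrictPartitionOf lam ℓ) {i : ℕ} (hi : i < ℓ) :
    ShiftedBox lam i i := ⟨le_refl i, by have := h.2.1 i hi; omega⟩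

lemma aux_box_diag' (h : IsStrictPartitionOf lam ℓ) {i : ℕ} (hi : i + 1 < ℓ) :
    ShiftedBox lam i (i + 1) := by
  have h1 := h.1 i hi
  have h2 := h.2.1 (i + 1) hi
  exact ⟨by omega, by omega⟩

lemma aux_diag_lt (Q : QSVT lam n) (h : IsStrictPartitionOf lam ℓ) {i : ℕ} (hi : i + 1 < ℓ)
    {a c : ℕ} (ha : a ∈ Q.T (i, i)) (hc : c ∈ Q.T (i + 1, i + 1)) : a < c := by
  have hb1 : ShiftedBox lam i i := aux_box_diag h (by omega)
  have hb2 : ShiftedBox lam i (i + 1) := aux_box_diag' h hi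
  have hb3 : ShiftedBox lam (i + 1) (i + 1) := aux_box_diag h hi
  obtain ⟨b, hb⟩ := Q.nonempty i (i + 1) hb2
  have h1 := Q.row i i hb1 hb2 a ha b hb
  have h2 := Q.col i (i + 1) hb2 hb3 b hb c hc
  omega

lemma aux_diag_lt' (Q : QSVT lam n) (h : IsStrictPartitionOf lam ℓ) {i i' : ℕ}
    (hii : i < i') (hi' : i' < ℓ) {a c : ℕ} (ha : a ∈ Q.T (i, i)) (hc : c ∈ Q.T (i', i')) :
    a < c := by
  have H : ∀ i'', i < i'' → i'' < ℓ → ∀ c ∈ Q.T (i'', i''), a < c := by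
    intro i''
    induction i'' with
    | zero => omega
    | succ k ih =>
      intro hik hkl c hc
      rcases Nat.lt_or_ge i k with h2 | h2
      · obtain ⟨b, hb⟩ := Q.nonempty k k (aux_box_diag h (by omega))
        exact lt_trans (ih h2 (by omega) b hb) (aux_diag_lt Q h hkl hb hc)
      · have hik' : i = k := by omega
        subst hik'
        exact aux_diag_lt Q h hkl ha hc
  exact H i' hii hi' c hc

/-- Construction P → Q: insert the odd letter `min − 1` into each diagonal box. -/
noncomputable def addDiag (P : PSVT lam n) (ℓ : ℕ) : ℕ × ℕ → Finset ℕ := fun p =>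
  if p.1 = p.2 ∧ p.1 < ℓ then insert (sInf {a : ℕ | a ∈ P.T p} - 1) (P.T p) else P.T p

lemma addDiag_m (P : PSVT lam n) {i : ℕ} (hbox : ShiftedBox lam i i) :
    sInf {a : ℕ | a ∈ P.T (i, i)} ∈ P.T (i, i) ∧ sInf {a : ℕ | a ∈ P.T (i, i)} % 2 = 0 := by
  have hne : {a : ℕ | a ∈ P.T (i, i)}.Nonempty := by
    obtain ⟨x, hx⟩ := P.nonempty i i hbox; exact ⟨x, hx⟩
  have hmem : sInf {a : ℕ | a ∈ P.T (i, i)} ∈ {a : ℕ | a ∈ P.T (i, i)} := Nat.sInf_mem hne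
  exact ⟨hmem, P.diag i hbox _ hmem⟩

noncomputable def addDiagQ (P : PSVT lam n) (ℓ : ℕ) : QSVT lam n where
  T := addDiag P ℓ
  nonempty := by
    intro i j hbox
    simp only [addDiag]
    split_ifs with hd
    · exact Finset.insert_nonempty _ _
    · exact P.nonempty i j hbox
  bounded := by
    intro i j hbox a ha
    simp only [addDiag] at ha
    split_ifs at ha with hd
    · have hij : i = j := hd.1
      subst hij
      rcases Finset.mem_insert.1 ha with h1 | h1
      · have hm := addDiag_m P hbox
        have hb := P.bounded i i hbox _ hm.1
        omega
      · exact P.bounded i i hbox a h1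
    · exact P.bounded i j hbox a ha
  row := by
    intro i j hb1 hb2 a ha b hb
    have h0 : i ≤ j := hb1.1
    simp only [addDiag] at ha hb
    split_ifs at hb with hd2
    · have : i = j + 1 := hd2.1
      omega
    split_ifs at ha with hd
    · have hij : i = j := hd.1
      subst hij
      rcases Finset.mem_insert.1 ha with h1 | h1
      · have hm := addDiag_m P hb1
        have hbd := P.bounded i i hb1 _ hm.1
        have hr := P.row i i hb1 hb2 _ hm.1 b hb
        omega
      · exact P.row i i hb1 hb2 a h1 b hb
    · exact P.row i j hb1 hb2 a ha b hb
  col := by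
    intro i j hb1 hb2 a ha b hb
    have hij : i + 1 ≤ j := hb2.1
    simp only [addDiag] at ha hb
    split_ifs at ha with hd1
    · have : i = j := hd1.1
      omega
    split_ifs at hb with hd
    · have hij2 : i + 1 = j := hd.1
      subst hij2
      rcases Finset.mem_insert.1 hb with h1 | h1
      · have hm := addDiag_m P hb2
        have hbd := P.bounded (i + 1) (i + 1) hb2 _ hm.1
        have hc := P.col i (i + 1) hb1 hb2 a ha _ hm.1
        omega
      · exact P.col i (i + 1) hb1 hb2 a ha b h1
    · exact P.col i j hb1 hb2 a ha b hb

lemma addDiag_deg (P : PSVT lam n) (h : IsStrictPartitionOf lam ℓ) :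
    tabDeg lam ℓ (addDiag P ℓ) = tabDeg lam ℓ P.T + ℓ := by
  unfold tabDeg
  have key : ∀ i ∈ Finset.range ℓ,
      ∑ j ∈ Finset.Ico i (i + lam i), (addDiag P ℓ (i, j)).card
        = (∑ j ∈ Finset.Ico i (i + lam i), (P.T (i, j)).card) + 1 := by
    intro i hi
    rw [Finset.mem_range] at hi
    have hbox := aux_box_diag h hi
    have hmem : i ∈ Finset.Ico i (i + lam i) := by
      rw [Finset.mem_Ico]; have := h.2.1 i hi; omega
    rw [← Finset.add_sum_erase _ _ hmem, ← Finset.add_sum_erase _ _ hmem]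
    have h1 : ∀ j ∈ (Finset.Ico i (i + lam i)).erase i,
        (addDiag P ℓ (i, j)).card = (P.T (i, j)).card := by
      intro j hj
      have hji : j ≠ i := (Finset.mem_erase.1 hj).1
      simp only [addDiag]
      split_ifs with hd
      · exact absurd (hd.1 : i = j) (by omega)
      · rfl
    rw [Finset.sum_congr rfl h1]
    have hm := addDiag_m P hbox
    have hbd := P.bounded i i hbox _ hm.1
    have hcard : (addDiag P ℓ (i, i)).card = (P.T (i, i)).card + 1 := by
      simp only [addDiag]
      rw [if_pos ⟨trivial, hi⟩]
      rw [Finset.card_insert_of_notMem]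
      intro hmem'
      have := Nat.sInf_le (show sInf {a : ℕ | a ∈ P.T (i, i)} - 1 ∈ {a : ℕ | a ∈ P.T (i, i)} from hmem')
      omega
    omega
  rw [Finset.sum_congr rfl key, Finset.sum_add_distrib, Finset.sum_const, Finset.card_range,
    smul_eq_mul, mul_one]

/-- Construction Q → P: keep only even entries in each diagonal box, or `{max + 1}`
if all entries are odd. -/
noncomputable def dropOdd (Q : QSVT lam n) : ℕ × ℕ → Finset ℕ := fun p =>
  if p.1 = p.2 then
    if ((Q.T p).filter (fun a => a % 2 = 0)).Nonempty then (Q.T p).filter (fun a => a % 2 = 0)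
    else {sSup {a : ℕ | a ∈ Q.T p} + 1}
  else Q.T p

lemma dropOdd_M (Q : QSVT lam n) {i : ℕ} (hbox : ShiftedBox lam i i)
    (hE : ¬((Q.T (i, i)).filter (fun a => a % 2 = 0)).Nonempty) :
    sSup {a : ℕ | a ∈ Q.T (i, i)} ∈ Q.T (i, i) ∧ sSup {a : ℕ | a ∈ Q.T (i, i)} % 2 = 1 ∧
      ∀ a ∈ Q.T (i, i), a ≤ sSup {a : ℕ | a ∈ Q.T (i, i)} := by
  have hne : {a : ℕ | a ∈ Q.T (i, i)}.Nonempty := by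
    obtain ⟨x, hx⟩ := Q.nonempty i i hbox; exact ⟨x, hx⟩
  have hbdd : BddAbove {a : ℕ | a ∈ Q.T (i, i)} := (Q.T (i, i)).bddAbove
  have hmem : sSup {a : ℕ | a ∈ Q.T (i, i)} ∈ {a : ℕ | a ∈ Q.T (i, i)} := Nat.sSup_mem hne hbdd
  refine ⟨hmem, ?_, fun a ha => le_csSup hbdd ha⟩
  by_contra hodd
  exact hE ⟨_, Finset.mem_filter.2 ⟨hmem, by omega⟩⟩

noncomputable def dropOddP (Q : QSVT lam n) : PSVT lam n where
  T := dropOdd Q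
  nonempty := by
    intro i j hbox
    simp only [dropOdd]
    split_ifs with hd hE
    · exact hE
    · exact Finset.singleton_nonempty _
    · exact Q.nonempty i j hbox
  bounded := by
    intro i j hbox a ha
    simp only [dropOdd] at ha
    split_ifs at ha with hd hE
    · have hij : i = j := hd
      subst hij
      exact Q.bounded i i hbox a (Finset.mem_filter.1 ha).1
    · have hij : i = j := hd
      subst hij
      rw [Finset.mem_singleton] at ha
      have hm := dropOdd_M Q hbox hE
      have hb := Q.bounded i i hbox _ hm.1
      omega
    · exact Q.bounded i j hbox a ha
  row := by
    intro i j hb1 hb2 a ha b hb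
    have h0 : i ≤ j := hb1.1
    simp only [dropOdd] at ha hb
    split_ifs at hb with hd2 hE2
    · have : i = j + 1 := hd2
      omega
    · have : i = j + 1 := hd2
      omega
    split_ifs at ha with hd hE
    · have hij : i = j := hd
      subst hij
      exact Q.row i i hb1 hb2 a (Finset.mem_filter.1 ha).1 b hb
    · have hij : i = j := hd
      subst hij
      rw [Finset.mem_singleton] at ha
      have hm := dropOdd_M Q hb1 hE
      have hr := Q.row i i hb1 hb2 _ hm.1 b hb
      omega
    · exact Q.row i j hb1 hb2 a ha b hb
  col := by
    intro i j hb1 hb2 a ha b hb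
    have hij : i + 1 ≤ j := hb2.1
    simp only [dropOdd] at ha hb
    split_ifs at ha with hd1 hE1
    · have : i = j := hd1
      omega
    · have : i = j := hd1
      omega
    split_ifs at hb with hd hE
    · have hij2 : i + 1 = j := hd
      subst hij2
      exact Q.col i (i + 1) hb1 hb2 a ha b (Finset.mem_filter.1 hb).1
    · have hij2 : i + 1 = j := hd
      subst hij2
      rw [Finset.mem_singleton] at hb
      have hm := dropOdd_M Q hb2 hE
      have hc := Q.col i (i + 1) hb1 hb2 a ha _ hm.1
      omega
    · exact Q.col i j hb1 hb2 a ha b hb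
  diag := by
    intro i hbox a ha
    simp only [dropOdd, if_pos trivial] at ha
    split_ifs at ha with hE
    · exact (Finset.mem_filter.1 ha).2
    · rw [Finset.mem_singleton] at ha
      have hm := dropOdd_M Q hbox hE
      omega

lemma dropOdd_deg (Q : QSVT lam n) (h : IsStrictPartitionOf lam ℓ) (hn : ℓ ≤ n) :
    tabDeg lam ℓ Q.T ≤ tabDeg lam ℓ (dropOdd Q) + n := by
  classical
  let O : ℕ → Finset ℕ := fun i => (Q.T (i, i)).filter (fun a => a % 2 = 1)
  have hOsum : ∑ i ∈ Finset.range ℓ, (O i).card ≤ n := by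
    have hdisj : ∀ i ∈ Finset.range ℓ, ∀ i' ∈ Finset.range ℓ, i ≠ i' → Disjoint (O i) (O i') := by
      intro i hi i' hi' hne
      rw [Finset.mem_range] at hi hi'
      rw [Finset.disjoint_left]
      intro a hai hai'
      have h1 : a ∈ Q.T (i, i) := (Finset.mem_filter.1 hai).1
      have h2 : a ∈ Q.T (i', i') := (Finset.mem_filter.1 hai').1
      rcases Nat.lt_or_ge i i' with hlt | hge
      · exact absurd (aux_diag_lt' Q h hlt hi' h1 h2) (lt_irrefl a)
      · have hlt' : i' < i := by omega
        exact absurd (aux_diag_lt' Q h hlt' hi h2 h1) (lt_irrefl a)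
    have hcard := Finset.card_biUnion hdisj
    have hsub : (Finset.range ℓ).biUnion O ⊆ (Finset.range n).image (fun k => 2 * k + 1) := by
      intro a ha
      rw [Finset.mem_biUnion] at ha
      obtain ⟨i, hi, hai⟩ := ha
      rw [Finset.mem_range] at hi
      obtain ⟨haT, hodd⟩ := Finset.mem_filter.1 hai
      have hb := Q.bounded i i (aux_box_diag h hi) a haT
      rw [Finset.mem_image]
      refine ⟨a / 2, by rw [Finset.mem_range]; omega, by omega⟩
    calc ∑ i ∈ Finset.range ℓ, (O i).card = ((Finset.range ℓ).biUnion O).card := hcard.symm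
      _ ≤ ((Finset.range n).image (fun k => 2 * k + 1)).card := Finset.card_le_card hsub
      _ ≤ (Finset.range n).card := Finset.card_image_le
      _ = n := Finset.card_range n
  have hdiag : ∀ i ∈ Finset.range ℓ, (Q.T (i, i)).card ≤ (dropOdd Q (i, i)).card + (O i).card := by
    intro i hi
    rw [Finset.mem_range] at hi
    have hbox := aux_box_diag h hi
    have hsplit : ((Q.T (i, i)).filter (fun a => a % 2 = 0)).card + (O i).card
        = (Q.T (i, i)).card := by
      show ((Q.T (i, i)).filter (fun a => a % 2 = 0)).card
          + ((Q.T (i, i)).filter (fun a => a % 2 = 1)).card = (Q.T (i, i)).card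
      have heq : (Q.T (i, i)).filter (fun a => a % 2 = 1)
          = (Q.T (i, i)).filter (fun a => ¬a % 2 = 0) :=
        Finset.filter_congr (by intro a _; omega)
      rw [heq]
      exact Finset.card_filter_add_card_filter_not _
    simp only [dropOdd]
    rw [if_pos trivial]
    split_ifs with hE
    · omega
    · have hz : ((Q.T (i, i)).filter (fun a => a % 2 = 0)).card = 0 := by
        rw [Finset.card_eq_zero]
        exact Finset.not_nonempty_iff_eq_empty.1 hE
      rw [Finset.card_singleton]
      omega
  have split : ∀ f : ℕ × ℕ → Finset ℕ, tabDeg lam ℓ f =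
      (∑ i ∈ Finset.range ℓ, (f (i, i)).card) +
        ∑ i ∈ Finset.range ℓ, ∑ j ∈ (Finset.Ico i (i + lam i)).erase i, (f (i, j)).card := by
    intro f
    unfold tabDeg
    rw [← Finset.sum_add_distrib]
    apply Finset.sum_congr rfl
    intro i hi
    rw [Finset.mem_range] at hi
    have hmem : i ∈ Finset.Ico i (i + lam i) := by
      rw [Finset.mem_Ico]; have := h.2.1 i hi; omega
    rw [← Finset.add_sum_erase _ _ hmem]
  have tail_eq : ∑ i ∈ Finset.range ℓ, ∑ j ∈ (Finset.Ico i (i + lam i)).erase i,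
      ((dropOdd Q) (i, j)).card
      = ∑ i ∈ Finset.range ℓ, ∑ j ∈ (Finset.Ico i (i + lam i)).erase i, (Q.T (i, j)).card := by
    apply Finset.sum_congr rfl
    intro i _
    apply Finset.sum_congr rfl
    intro j hj
    have hji : j ≠ i := (Finset.mem_erase.1 hj).1
    simp only [dropOdd]
    split_ifs with hd hE
    · exact absurd (hd : i = j) (by omega)
    · exact absurd (hd : i = j) (by omega)
    · rfl
  have hdsum : ∑ i ∈ Finset.range ℓ, (Q.T (i, i)).card
      ≤ (∑ i ∈ Finset.range ℓ, ((dropOdd Q) (i, i)).card) + ∑ i ∈ Finset.range ℓ, (O i).card := by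
    rw [← Finset.sum_add_distrib]
    exact Finset.sum_le_sum hdiag
  rw [split Q.T, split (dropOdd Q), tail_eq]
  omega

/-- The trivial bound on degrees. -/
lemma tabDeg_le (Q : QSVT lam n) (ℓ : ℕ) :
    tabDeg lam ℓ Q.T ≤ 2 * n * ∑ i ∈ Finset.range ℓ, lam i := by
  unfold tabDeg
  rw [Finset.mul_sum]
  apply Finset.sum_le_sum
  intro i _
  calc ∑ j ∈ Finset.Ico i (i + lam i), (Q.T (i, j)).card
      ≤ ∑ j ∈ Finset.Ico i (i + lam i), 2 * n := by
        apply Finset.sum_le_sum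
        intro j hj
        rw [Finset.mem_Ico] at hj
        have hbox : ShiftedBox lam i j := ⟨hj.1, hj.2⟩
        have hsub : Q.T (i, j) ⊆ Finset.Icc 1 (2 * n) := by
          intro a ha
          have := Q.bounded i j hbox a ha
          rw [Finset.mem_Icc]; omega
        have := Finset.card_le_card hsub
        rw [Nat.card_Icc] at this
        omega
    _ = 2 * n * lam i := by
        rw [Finset.sum_const, Nat.card_Ico, smul_eq_mul, Nat.add_sub_cancel_left, Nat.mul_comm]

/-- A base tableau showing nonemptiness. -/
def basePSVT (h : IsStrictPartitionOf lam ℓ) (hn : ℓ ≤ n) : PSVT lam n where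
  T := fun p => {2 * (p.1 + 1)}
  nonempty := fun i j _ => ⟨2 * (i + 1), Finset.mem_singleton_self _⟩
  bounded := by
    intro i j hbox a ha
    rw [Finset.mem_singleton] at ha
    have hiℓ : i < ℓ := by
      by_contra hc
      have h0 := h.2.2 i (by omega)
      have h1 := hbox.1
      have h2 := hbox.2
      omega
    omega
  row := by
    intro i j _ _ a ha b hb
    rw [Finset.mem_singleton] at ha hb
    omega
  col := by
    intro i j _ _ a ha b hb
    rw [Finset.mem_singleton] at ha hb
    omega
  diag := by
    intro i _ a ha
    rw [Finset.mem_singleton] at ha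
    omega

end Aux10

/-- for any strict partition `lam` of length `ℓ` and any `n ≥ ℓ`,
the difference `deg GQ_{lam,n} - deg GP_{lam,n}` lies in `[ℓ, n]`; in particular,
if `n = ℓ` then `deg GQ_{lam,n} = deg GP_{lam,n} + n`. -/
theorem stmt10 (lam : ℕ → ℕ) (ℓ : ℕ) (hlam : IsStrictPartitionOf lam ℓ) (hℓ : 0 < ℓ)
    (n : ℕ) (hn : ℓ ≤ n) :
    (degGP lam ℓ n + ℓ ≤ degGQ lam ℓ n ∧ degGQ lam ℓ n ≤ degGP lam ℓ n + n) ∧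
      (n = ℓ → degGQ lam ℓ n = degGP lam ℓ n + n) := by
  classical
  have hSPne : {d | ∃ T : PSVT lam n, tabDeg lam ℓ T.T = d}.Nonempty :=
    ⟨_, basePSVT hlam hn, rfl⟩
  have hSQne : {d | ∃ T : QSVT lam n, tabDeg lam ℓ T.T = d}.Nonempty :=
    ⟨_, (basePSVT hlam hn).toQSVT, rfl⟩
  have hQbdd : BddAbove {d | ∃ T : QSVT lam n, tabDeg lam ℓ T.T = d} := by
    refine ⟨2 * n * ∑ i ∈ Finset.range ℓ, lam i, ?_⟩
    rintro d ⟨T, rfl⟩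
    exact tabDeg_le T ℓ
  have hPbdd : BddAbove {d | ∃ T : PSVT lam n, tabDeg lam ℓ T.T = d} := by
    refine ⟨2 * n * ∑ i ∈ Finset.range ℓ, lam i, ?_⟩
    rintro d ⟨T, rfl⟩
    exact tabDeg_le T.toQSVT ℓ
  have key1 : degGP lam ℓ n + ℓ ≤ degGQ lam ℓ n := by
    unfold degGP degGQ
    obtain ⟨P, hP⟩ := Nat.sSup_mem hSPne hPbdd
    rw [← hP, ← addDiag_deg P hlam]
    exact le_csSup hQbdd ⟨addDiagQ P ℓ, rfl⟩
  have key2 : degGQ lam ℓ n ≤ degGP lam ℓ n + n := by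
    unfold degGP degGQ
    obtain ⟨Q, hQ⟩ := Nat.sSup_mem hSQne hQbdd
    rw [← hQ]
    have h1 := dropOdd_deg Q hlam hn
    have h2 : tabDeg lam ℓ (dropOdd Q) ≤ sSup {d | ∃ T : PSVT lam n, tabDeg lam ℓ T.T = d} :=
      le_csSup hPbdd ⟨dropOddP Q, rfl⟩
    omega
  exact ⟨⟨key1, key2⟩, fun h => by omega⟩
end

section
/- For every P-shifted set-valued tableau T of strict-partition shape λ with entries at most n, one obtains a Q-shifted set-valued tableau T' of the same shape with d(T') = d(T) + ℓ(λ) by adding to each main-diagonal box a primed copy of its minimum element. -/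
/-- for every `P`-shifted set-valued tableau `T` of strict-partition
shape `lam` (with `L` rows) with entries at most `n`, adding to each main-diagonal box
a primed copy of its minimum element (in the encoding: inserting `min - 1`, the primed
copy of the even minimum) yields a `Q`-shifted set-valued tableau `T'` of the same
shape with `d(T') = d(T) + L`. -/
theorem stmt13 (lam : ℕ → ℕ) (L : ℕ) (hlam : IsStrictPartitionOf lam L)
    (n : ℕ) (T : PSVT lam n) :
    ∃ T' : QSVT lam n,
      (∀ i j : ℕ, T'.T (i, j) =
        if i = j ∧ i < L then insert (((T.T (i, j)).min.untopD 1) - 1) (T.T (i, j))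
        else T.T (i, j)) ∧
      tabDeg lam L T'.T = tabDeg lam L T.T + L := by
  classical
  have hbox : ∀ i, i < L → ShiftedBox lam i i := fun i hi =>
    ⟨le_rfl, by have := hlam.2.1 i hi; omega⟩
  -- basic facts about the minimum of a diagonal box
  have hkey : ∀ i, i < L →
      ((T.T (i, i)).min.untopD 1 ∈ T.T (i, i) ∧
        ∀ a ∈ T.T (i, i), (T.T (i, i)).min.untopD 1 ≤ a) := by
    intro i hi
    have hne := T.nonempty i i (hbox i hi)
    have hco : ((T.T (i, i)).min' hne : WithTop ℕ) = (T.T (i, i)).min :=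
      Finset.coe_min' hne
    have : (T.T (i, i)).min.untopD 1 = (T.T (i, i)).min' hne := by
      rw [← hco]; rfl
    rw [this]
    exact ⟨Finset.min'_mem _ _, fun a ha => Finset.min'_le _ a ha⟩
  set F : ℕ × ℕ → Finset ℕ := fun p =>
    if p.1 = p.2 ∧ p.1 < L then insert (((T.T p).min.untopD 1) - 1) (T.T p)
    else T.T p with hF
  have hFval : ∀ i j : ℕ, F (i, j) =
      if i = j ∧ i < L then insert (((T.T (i, j)).min.untopD 1) - 1) (T.T (i, j))
      else T.T (i, j) := fun i j => rfl
  -- diagonal minimum is even and ≥ 2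
  have hmfacts : ∀ i, i < L →
      (T.T (i, i)).min.untopD 1 % 2 = 0 ∧ 2 ≤ (T.T (i, i)).min.untopD 1 ∧
        (T.T (i, i)).min.untopD 1 ≤ 2 * n := by
    intro i hi
    have hm := (hkey i hi).1
    have heven := T.diag i (hbox i hi) _ hm
    have hb := T.bounded i i (hbox i hi) _ hm
    exact ⟨heven, by omega, hb.2⟩
  refine ⟨⟨F, ?_, ?_, ?_, ?_⟩, fun i j => hFval i j, ?_⟩
  · -- nonempty
    intro i j hb
    rw [hFval]
    split
    · exact Finset.insert_nonempty _ _
    · exact T.nonempty i j hb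
  · -- bounded
    intro i j hb a ha
    rw [hFval] at ha
    split at ha
    · rename_i h
      obtain ⟨rfl, hiL⟩ := h
      rcases Finset.mem_insert.mp ha with rfl | ha'
      · have := hmfacts i hiL
        omega
      · exact T.bounded i i hb _ ha'
    · exact T.bounded i j hb _ ha
  · -- row
    intro i j hb1 hb2 a ha b hb
    have hne : ¬ (i = j + 1 ∧ i < L) := by
      intro h; have := hb1.1; omega
    rw [hFval, if_neg hne] at hb
    rw [hFval] at ha
    split at ha
    · rename_i h
      obtain ⟨rfl, hiL⟩ := h
      rcases Finset.mem_insert.mp ha with rfl | ha'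
      · left
        have hm := (hkey i hiL).1
        have := T.row i i hb1 hb2 _ hm _ hb
        have h2 := (hmfacts i hiL).2.1
        omega
      · exact T.row i i hb1 hb2 _ ha' _ hb
    · exact T.row i j hb1 hb2 _ ha _ hb
  · -- col
    intro i j hb1 hb2 a ha b hb
    have hne : ¬ (i = j ∧ i < L) := by
      intro h; have := hb2.1; omega
    rw [hFval, if_neg hne] at ha
    rw [hFval] at hb
    split at hb
    · rename_i h
      obtain ⟨hj, hiL⟩ := h
      subst hj
      rcases Finset.mem_insert.mp hb with rfl | hb'
      · have hm := (hkey (i+1) hiL).1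
        have hcmp := T.col i (i+1) hb1 hb2 _ ha _ hm
        have h2 := (hmfacts (i+1) hiL).2.1
        have heven := (hmfacts (i+1) hiL).1
        -- a < m or (a = m ∧ a odd); m even so a < m
        have halt : a < (T.T (i+1, i+1)).min.untopD 1 := by
          rcases hcmp with h | ⟨rfl, hodd⟩
          · exact h
          · omega
        by_cases hq : a = (T.T (i+1, i+1)).min.untopD 1 - 1
        · right; constructor
          · exact hq
          · omega
        · left; omega
      · exact T.col i (i+1) hb1 hb2 _ ha _ hb'
    · exact T.col i j hb1 hb2 _ ha _ hb
  · -- degree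
    unfold tabDeg
    have hstep : ∀ i ∈ Finset.range L,
        ∑ j ∈ Finset.Ico i (i + lam i), (F (i, j)).card
          = (∑ j ∈ Finset.Ico i (i + lam i), (T.T (i, j)).card) + 1 := by
      intro i hi
      have hiL := Finset.mem_range.mp hi
      have hcongr : ∀ j ∈ Finset.Ico i (i + lam i),
          (F (i, j)).card = (T.T (i, j)).card + (if j = i then 1 else 0) := by
        intro j hj
        by_cases hji : j = i
        · subst hji
          rw [hFval, if_pos ⟨rfl, hiL⟩, if_pos rfl]
          have hnm : ((T.T (j, j)).min.untopD 1) - 1 ∉ T.T (j, j) := by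
            intro hmem
            have h1 := T.diag j (hbox j hiL) _ hmem
            have h2 := (hmfacts j hiL).1
            have h3 := (hmfacts j hiL).2.1
            omega
          rw [Finset.card_insert_of_notMem hnm]
        · rw [hFval, if_neg (fun h => hji h.1.symm), if_neg hji, add_zero]
      rw [Finset.sum_congr rfl hcongr, Finset.sum_add_distrib,
        Finset.sum_ite_eq' _ i (fun _ => 1)]
      have hmem : i ∈ Finset.Ico i (i + lam i) := by
        have := hlam.2.1 i hiL
        simp only [Finset.mem_Ico]
        omega
      rw [if_pos hmem]
    rw [Finset.sum_congr rfl hstep, Finset.sum_add_distrib, Finset.sum_const,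
      Finset.card_range, smul_eq_mul, mul_one]
end

section
/- A Grassmannian permutation w_{λ,n} is inverse fireworks if and only if the partition λ is strict. -/
/-!
Permutations of `ℕ` are used, acting on the positive integers `1, 2, 3, …`
(the value at `0` is irrelevant and fixed).  `lam` is a partition written
1-indexed: its parts are `lam 1 ≥ lam 2 ≥ ⋯ ≥ lam ℓ > 0` and `lam i = 0` for `i > ℓ`.
-/

/-- `lam` is a partition with exactly `ℓ` positive parts (1-indexed). -/
def IsPartition₁ (lam : ℕ → ℕ) (ℓ : ℕ) : Prop :=
  (∀ i, 1 ≤ i → i + 1 ≤ ℓ → lam (i + 1) ≤ lam i) ∧ (∀ i, 1 ≤ i → i ≤ ℓ → 0 < lam i) ∧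
    (∀ i, ℓ < i → lam i = 0) ∧ lam 0 = 0

/-- `w` is `n`-Grassmannian: `w(i) < w(i+1)` for all positive `i ≠ n`. -/
def IsGrassmannian (n : ℕ) (w : Equiv.Perm ℕ) : Prop :=
  ∀ i, 1 ≤ i → i ≠ n → w i < w (i + 1)

/-- `w` is the Grassmannian permutation `w_{lam,n}`: it is `n`-Grassmannian, fixes `0`
and everything above `n + lam 1`, and for each `1 ≤ i ≤ n` there are exactly `lam i`
values `v > n` with `w v < w (n + 1 - i)`. -/
def IsGrassmannianOfShape (lam : ℕ → ℕ) (ℓ n : ℕ) (w : Equiv.Perm ℕ) : Prop :=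
  IsGrassmannian n w ∧ w 0 = 0 ∧ (∀ v, n + lam 1 < v → w v = v) ∧
    ∀ i, 1 ≤ i → i ≤ n →
      ((Finset.Ioc n (n + lam 1)).filter (fun v => w v < w (n + 1 - i))).card = lam i

/-- `w` is inverse fireworks, via the Rothe-diagram characterization
(Mészáros–Setiabrata–St. Dizier): whenever row `i ≥ 1` of the Rothe diagram
`D(w) = {(i,j) : j < w i, i < w⁻¹ j}` is nonempty, its rightmost box is
`(i, w i - 1)`, i.e. `(i, w i - 1) ∈ D(w)`. -/
def IsInverseFireworks (w : Equiv.Perm ℕ) : Prop :=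
  ∀ i, 1 ≤ i → (∃ j, 1 ≤ j ∧ j < w i ∧ i < w.symm j) →
    (1 ≤ w i - 1 ∧ i < w.symm (w i - 1))

/-- `w` is strictly increasing on `[1, n]`. -/
lemma grass_mono1 {n : ℕ} {w : Equiv.Perm ℕ} (hg : IsGrassmannian n w) :
    ∀ q, q ≤ n → ∀ p, 1 ≤ p → p < q → w p < w q := by
  intro q
  induction q with
  | zero => omega
  | succ m ih =>
    intro hq p hp hpq
    have hm : w m < w (m + 1) := hg m (by omega) (by omega)
    rcases Nat.lt_or_ge p m with h | h
    · exact lt_trans (ih (by omega) p hp h) hm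
    · have hpm : p = m := by omega
      subst hpm; exact hm

/-- `w` is strictly increasing on `(n, ∞)`. -/
lemma grass_mono2 {n : ℕ} {w : Equiv.Perm ℕ} (hg : IsGrassmannian n w) :
    ∀ q p, n < p → p < q → w p < w q := by
  intro q
  induction q with
  | zero => omega
  | succ m ih =>
    intro p hp hpq
    have hm : w m < w (m + 1) := hg m (by omega) (by omega)
    rcases Nat.lt_or_ge p m with h | h
    · exact lt_trans (ih p hp h) hm
    · have hpm : p = m := by omega
      subst hpm; exact hm

lemma grass_pos {w : Equiv.Perm ℕ} (h0 : w 0 = 0) : ∀ v, 1 ≤ v → 1 ≤ w v := by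
  intro v hv
  rcases Nat.eq_zero_or_pos (w v) with h | h
  · have hh : w v = w 0 := by rw [h0, h]
    have := w.injective hh
    omega
  · exact h

/-- The key evaluation: `w p = p + lam (n + 1 - p)` for `1 ≤ p ≤ n`. -/
lemma grass_val (lam : ℕ → ℕ) (ℓ n : ℕ)
    (w : Equiv.Perm ℕ) (hw : IsGrassmannianOfShape lam ℓ n w) :
    ∀ p, 1 ≤ p → p ≤ n → w p = p + lam (n + 1 - p) := by
  obtain ⟨hg, h0, hfix, hcount⟩ := hw
  have hposw := grass_pos h0
  have hleM : ∀ v, v ≤ n + lam 1 → w v ≤ n + lam 1 := by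
    intro v hv
    by_contra h
    push_neg at h
    have h1 : w (w v) = w v := hfix (w v) h
    have h2 : w v = v := w.injective h1
    omega
  intro p hp hpn
  have hwp1 : 1 ≤ w p := hposw p hp
  have hwpM : w p ≤ n + lam 1 := hleM p (by omega)
  have cardA : ((Finset.Icc 1 (n + lam 1)).filter (fun v => w v < w p)).card = w p - 1 := by
    rw [show w p - 1 = (Finset.Icc 1 (w p - 1)).card by rw [Nat.card_Icc]; omega]
    apply Finset.card_bij (fun v _ => w v)
    · intro v hv
      simp only [Finset.mem_filter, Finset.mem_Icc] at hv ⊢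
      exact ⟨hposw v hv.1.1, by omega⟩
    · intro a ha b hb hab
      exact w.injective hab
    · intro u hu
      simp only [Finset.mem_Icc] at hu
      refine ⟨w.symm u, ?_, by simp⟩
      simp only [Finset.mem_filter, Finset.mem_Icc, Equiv.apply_symm_apply]
      have h1 : 1 ≤ w.symm u := by
        rcases Nat.eq_zero_or_pos (w.symm u) with h | h
        · have hu0 : u = w 0 := by rw [← h]; simp
          rw [h0] at hu0; omega
        · exact h
      have h2 : w.symm u ≤ n + lam 1 := by
        by_contra hc
        push_neg at hc
        have hh : w (w.symm u) = w.symm u := hfix (w.symm u) hc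
        rw [Equiv.apply_symm_apply] at hh
        omega
      exact ⟨⟨h1, h2⟩, by omega⟩
  have cardB : ((Finset.Icc 1 n).filter (fun v => w v < w p)).card = p - 1 := by
    have heq : (Finset.Icc 1 n).filter (fun v => w v < w p) = Finset.Icc 1 (p - 1) := by
      ext q
      simp only [Finset.mem_filter, Finset.mem_Icc]
      constructor
      · rintro ⟨⟨h1, h2⟩, h3⟩
        refine ⟨h1, ?_⟩
        by_contra hc
        push_neg at hc
        rcases Nat.lt_or_ge p q with h | h
        · exact absurd (grass_mono1 hg q h2 p hp h) (by omega)
        · have : q = p := by omega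
          subst this; omega
      · rintro ⟨h1, h2⟩
        exact ⟨⟨h1, by omega⟩, grass_mono1 hg p hpn q h1 (by omega)⟩
    rw [heq, Nat.card_Icc]; omega
  have hkey := hcount (n + 1 - p) (by omega) (by omega)
  rw [show n + 1 - (n + 1 - p) = p by omega] at hkey
  have hsplit : Finset.Icc 1 (n + lam 1) = Finset.Icc 1 n ∪ Finset.Ioc n (n + lam 1) := by
    ext x
    simp only [Finset.mem_Icc, Finset.mem_union, Finset.mem_Ioc]
    omega
  have hdisj : Disjoint ((Finset.Icc 1 n).filter (fun v => w v < w p))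
      ((Finset.Ioc n (n + lam 1)).filter (fun v => w v < w p)) := by
    apply Finset.disjoint_filter_filter
    rw [Finset.disjoint_left]
    intro a ha hb
    simp only [Finset.mem_Icc] at ha
    simp only [Finset.mem_Ioc] at hb
    omega
  rw [hsplit, Finset.filter_union, Finset.card_union_of_disjoint hdisj, cardB, hkey] at cardA
  omega

/-- a Grassmannian permutation `w_{lam,n}` is inverse fireworks if and
only if the partition `lam` is strict. -/
theorem stmt14 (lam : ℕ → ℕ) (ℓ n : ℕ) (hpart : IsPartition₁ lam ℓ) (hn : ℓ ≤ n)
    (w : Equiv.Perm ℕ) (hw : IsGrassmannianOfShape lam ℓ n w) :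
    IsInverseFireworks w ↔ ∀ i, 1 ≤ i → i + 1 ≤ ℓ → lam (i + 1) < lam i := by
  have hval := grass_val lam ℓ n w hw
  obtain ⟨hg, h0, hfix, hcount⟩ := hw
  have hposw := grass_pos h0
  constructor
  · -- fireworks → strict
    intro hfw i hi hiℓ
    by_contra hc
    push_neg at hc
    have heq : lam (i + 1) = lam i := le_antisymm (hpart.1 i hi hiℓ) hc
    have hp2 : 2 ≤ n + 1 - i := by omega
    set p := n + 1 - i with hpd
    have hpn : p ≤ n := by omega
    have hwp : w p = p + lam i := by
      rw [hval p (by omega) hpn, show n + 1 - p = i by omega]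
    have hlami : 0 < lam i :=
      lt_of_lt_of_le (hpart.2.1 (i + 1) (by omega) hiℓ) (hpart.1 i hi hiℓ)
    have hcard := hcount i hi (by omega)
    have hne : ((Finset.Ioc n (n + lam 1)).filter (fun v => w v < w (n + 1 - i))).Nonempty := by
      rw [← Finset.card_pos, hcard]; exact hlami
    obtain ⟨v, hv⟩ := hne
    simp only [Finset.mem_filter, Finset.mem_Ioc] at hv
    have hwitness : ∃ j, 1 ≤ j ∧ j < w p ∧ p < w.symm j := by
      refine ⟨w v, hposw v (by omega), hv.2, ?_⟩
      rw [Equiv.symm_apply_apply]; omega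
    obtain ⟨-, h2⟩ := hfw p (by omega) hwitness
    have hwp1 : w (p - 1) = w p - 1 := by
      rw [hval (p - 1) (by omega) (by omega), show n + 1 - (p - 1) = i + 1 by omega, heq, hwp]
      omega
    have hsy : w.symm (w p - 1) = p - 1 := by
      rw [← hwp1, Equiv.symm_apply_apply]
    omega
  · -- strict → fireworks
    intro hstrict a ha hex
    obtain ⟨j, hj1, hj2, hj3⟩ := hex
    have han : a ≤ n := by
      by_contra hcn
      push_neg at hcn
      have hwv : w (w.symm j) = j := w.apply_symm_apply j
      have := grass_mono2 hg (w.symm j) a hcn hj3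
      omega
    set k := n + 1 - a with hkd
    have hka : n + 1 - k = a := by omega
    have hwa : w a = a + lam k := by
      rw [hval a ha han]
    have hklam : 0 < lam k := by
      by_contra hcl
      push_neg at hcl
      have hl0 : lam k = 0 := by omega
      have hwv : w (w.symm j) = j := w.apply_symm_apply j
      have hcard := hcount k (by omega) (by omega)
      rw [hka, hl0, Finset.card_eq_zero] at hcard
      set v := w.symm j with hvd
      rcases Nat.lt_or_ge n v with h | h
      · rcases Nat.lt_or_ge (n + lam 1) v with h2 | h2
        · have := hfix v h2
          omega
        · have hmem : v ∈ (Finset.Ioc n (n + lam 1)).filter (fun u => w u < w a) :=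
            Finset.mem_filter.mpr ⟨Finset.mem_Ioc.mpr ⟨h, h2⟩, by omega⟩
          rw [hcard] at hmem
          exact absurd hmem (Finset.notMem_empty v)
      · have := grass_mono1 hg v h a ha hj3
        omega
    have hk1 : 1 ≤ k := by omega
    have hkℓ : k ≤ ℓ := by
      by_contra hcl
      push_neg at hcl
      have := hpart.2.2.1 k hcl
      omega
    refine ⟨by omega, ?_⟩
    rcases Nat.lt_or_ge 1 a with h2a | h1a
    · -- a ≥ 2
      have hlt : lam (k + 1) < lam k := by
        rcases Nat.lt_or_ge ℓ (k + 1) with h | h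
        · have := hpart.2.2.1 (k + 1) h
          omega
        · exact hstrict k hk1 h
      have hwa1 : w (a - 1) = a - 1 + lam (k + 1) := by
        rw [hval (a - 1) (by omega) (by omega), show n + 1 - (a - 1) = k + 1 by omega]
      set v := w.symm (w a - 1) with hvd
      have hwv : w v = w a - 1 := w.apply_symm_apply (w a - 1)
      by_contra hcv
      push_neg at hcv
      rcases Nat.eq_or_lt_of_le hcv with h | h
      · rw [h] at hwv
        omega
      · rcases Nat.eq_zero_or_pos v with h0v | h0v
        · rw [h0v, h0] at hwv
          omega
        · rcases Nat.eq_or_lt_of_le (show v ≤ a - 1 by omega) with hv1 | hv1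
          · rw [hv1] at hwv
            omega
          · have := grass_mono1 hg (a - 1) (by omega) v h0v hv1
            omega
    · -- a = 1
      have ha1 : a = 1 := by omega
      subst ha1
      set v := w.symm (w 1 - 1) with hvd
      have hwv : w v = w 1 - 1 := w.apply_symm_apply (w 1 - 1)
      by_contra hcv
      push_neg at hcv
      interval_cases v
      · rw [h0] at hwv
        omega
      · omega
end

section
/- Replacing two consecutive rows (r, r−1) of a strict partition by (r, r−2) does not change the largest D-partition contained in it; i.e., if λ and λ' are strict partitions with λ'_k = λ_k, λ'_{k+1} = λ_{k+1} − 1 where λ_k − 1 = λ_{k+1}, and λ'_i = λ_i otherwise (assuming λ' is still a valid strict partition), then the largest D-partition contained in λ equals the largest D-partition contained in λ'. -/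
/-- let `lam` be a strict partition (of length `L`) with two consecutive
rows `lam k = r` and `lam (k+1) = r - 1` (row `k+1` directly above row `k`), and let
`lam'` be obtained by replacing the part `r - 1` with `r - 2` (so rows `(r, r-1)`
become `(r, r-2)`), assuming `lam'` is still a valid strict partition (of some
length `L'`).  Then the largest D-partition contained in `lam` coincides with the
largest D-partition contained in `lam'`. -/
theorem stmt17 (lam lam' : ℕ → ℕ) (L L' k : ℕ)
    (hlam : IsStrictPartitionOf lam L) (hk : k + 1 < L)
    (hadj : lam k = lam (k + 1) + 1)
    (hdef : ∀ i, lam' i = if i = k + 1 then lam (k + 1) - 1 else lam i)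
    (hlam' : IsStrictPartitionOf lam' L') :
    ∀ (Δ : ℕ → ℕ) (m : ℕ),
      IsLargestDPartitionIn Δ lam m ↔ IsLargestDPartitionIn Δ lam' m := by
  have key : ∀ (μ : ℕ → ℕ) (m : ℕ), IsDPartitionOf μ m →
      (Subpartition μ lam ↔ Subpartition μ lam') := by
    intro μ m hμ
    constructor
    · intro h i
      rw [hdef i]
      split_ifs with hi
      · subst hi
        by_contra hlt
        push_neg at hlt
        have h1 : μ (k+1) ≤ lam (k+1) := h (k+1)
        have hpos : 0 < lam (k+1) := hlam.2.1 (k+1) hk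
        have hm : k + 1 < m := by
          by_contra hm
          push_neg at hm
          have := hμ.2.2 (k+1) hm
          omega
        have h3 := hμ.1 k hm
        have h2 : μ k ≤ lam k := h k
        omega
      · exact h i
    · intro h i
      have hh := h i
      rw [hdef i] at hh
      split_ifs at hh with hi
      · subst hi; omega
      · exact hh
  intro Δ m
  constructor
  · rintro ⟨hD, hsub, hmax⟩
    exact ⟨hD, (key Δ m hD).1 hsub, fun μ m' hμ hsμ => hmax μ m' hμ ((key μ m' hμ).2 hsμ)⟩
  · rintro ⟨hD, hsub, hmax⟩
    exact ⟨hD, (key Δ m hD).2 hsub, fun μ m' hμ hsμ => hmax μ m' hμ ((key μ m' hμ).1 hsμ)⟩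
end
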